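/- arXiv:2005.06458 — 9 statements merged into one kernel-verified Lean document; each statement's English description precedes it below -/
import Mathlib

section
/- Let H ⊆ [ℕ]^∞ be a coideal on ℕ (i.e. nonempty, upward closed under ⊆, and whenever A ∪ B ∈ H then A ∈ H or B ∈ H). If H is a G_δ subset of the Cantor space, then H is P⁺: for every decreasing sequence (A_n) of elements of H there exists A_∞ ∈ H with A_∞ \ A_n finite for all n. -/
/-- Openness in the Cantor space gives a cylinder neighborhood. -/
lemma cyl_mem {U : Set (ℕ → Bool)} (hU : IsOpen U) {Y : ℕ → Bool} (hY : Y ∈ U) :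
    ∃ N, ∀ X : ℕ → Bool, (∀ i < N, X i = Y i) → X ∈ U := by
  obtain ⟨I, u, h1, h2⟩ := isOpen_pi_iff.1 hU Y hY
  refine ⟨(I.sup id) + 1, fun X hX => h2 ?_⟩
  intro i hi
  have : X i = Y i := hX i (Nat.lt_succ_of_le (Finset.le_sup (f := id) hi))
  rw [this]
  exact (h1 i hi).2

/-- One step of the recursive construction: extend the finite approximation `p.1`
(decided below `p.2`) using the function `Y` and the bound `pick`. -/
def cstep (Y : (ℕ → Bool) → ℕ → ℕ → (ℕ → Bool)) (pick : (ℕ → Bool) → ℕ → ℕ → ℕ)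
    (p : (ℕ → Bool) × ℕ) (k : ℕ) : (ℕ → Bool) × ℕ :=
  (fun n => Y p.1 p.2 k n && decide (n < max (pick p.1 p.2 k) (p.2 + 1)),
   max (pick p.1 p.2 k) (p.2 + 1))

/-- The sequence of finite approximations. -/
def cseq (Y : (ℕ → Bool) → ℕ → ℕ → (ℕ → Bool)) (pick : (ℕ → Bool) → ℕ → ℕ → ℕ) :
    ℕ → (ℕ → Bool) × ℕ
  | 0 => cstep Y pick (fun _ => false, 0) 0
  | k + 1 => cstep Y pick (cseq Y pick k) (k + 1)

/-- a coideal `H` on `ℕ` (viewed as a set of points of the Cantor space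
`ℕ → Bool`, consisting of infinite sets, nonempty, upward closed, and such that whenever a
union of two sets lies in `H` then one of the two lies in `H`) which is `G_δ` in the Cantor
space is `P⁺`: every decreasing sequence of elements of `H` admits a pseudo-intersection
in `H`. -/
theorem statement1 (H : Set (ℕ → Bool))
    (h_infinite : ∀ A ∈ H, {n | A n = true}.Infinite)
    (h_nonempty : H.Nonempty)
    (h_upward : ∀ A ∈ H, ∀ B : ℕ → Bool,
      {n | A n = true} ⊆ {n | B n = true} → B ∈ H)
    (h_union : ∀ A B : ℕ → Bool, (fun n => A n || B n) ∈ H → A ∈ H ∨ B ∈ H)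
    (h_Gδ : IsGδ H) :
    ∀ A : ℕ → (ℕ → Bool), (∀ n, A n ∈ H) →
      (∀ n, {k | A (n + 1) k = true} ⊆ {k | A n k = true}) →
      ∃ B ∈ H, ∀ n, ({k | B k = true} \ {k | A n k = true}).Finite := by
  intro A hA hdec
  -- monotonicity of the decreasing sequence
  have hmono : ∀ j i, j ≤ i → ∀ n, A i n = true → A j n = true := by
    intro j i hji
    induction i with
    | zero =>
      interval_cases j
      exact fun n hn => hn
    | succ i ih =>
      rcases Nat.eq_or_lt_of_le hji with h | h
      · subst h; exact fun n hn => hn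
      · exact fun n hn => ih (Nat.lt_succ_iff.mp h) n (hdec i hn)
  -- tails of elements of H are in H
  have htail : ∀ C ∈ H, ∀ m : ℕ, (fun n => C n && decide (m ≤ n)) ∈ H := by
    intro C hC m
    have hsplit : (fun n => (C n && decide (n < m)) || (C n && decide (m ≤ n))) ∈ H := by
      apply h_upward C hC
      intro n hn
      simp only [Set.mem_setOf_eq] at hn ⊢
      rcases Nat.lt_or_ge n m with h | h <;> simp [hn, h]
    rcases h_union _ _ hsplit with h | h
    · exfalso
      refine (Set.finite_Iio m).not_infinite ((h_infinite _ h).mono ?_)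
      intro n hn
      simp only [Set.mem_setOf_eq, Bool.and_eq_true, decide_eq_true_eq] at hn
      exact hn.2
    · exact h
  -- the G_δ presentation
  obtain ⟨U, hUo, hHU⟩ := h_Gδ.eq_iInter_nat
  -- the gluing function
  set Yf : (ℕ → Bool) → ℕ → ℕ → (ℕ → Bool) :=
    fun t m k n => t n || (A k n && decide (m ≤ n)) with hYf
  have hYH : ∀ t m k, Yf t m k ∈ H := by
    intro t m k
    refine h_upward _ (htail (A k) (hA k) m) _ ?_
    intro n hn
    simp only [Set.mem_setOf_eq] at hn ⊢
    simp [hYf, hn]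
  have hYU : ∀ t m k, Yf t m k ∈ U k := by
    intro t m k
    have := hYH t m k
    rw [hHU] at this
    exact Set.mem_iInter.mp this k
  have hcyl : ∀ t m k, ∃ N, ∀ X : ℕ → Bool, (∀ i < N, X i = Yf t m k i) → X ∈ U k :=
    fun t m k => cyl_mem (hUo k) (hYU t m k)
  set pick : (ℕ → Bool) → ℕ → ℕ → ℕ := fun t m k => (hcyl t m k).choose with hpick
  have hpick_spec : ∀ t m k, ∀ X : ℕ → Bool,
      (∀ i < pick t m k, X i = Yf t m k i) → X ∈ U k :=
    fun t m k => (hcyl t m k).choose_spec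
  set S : ℕ → (ℕ → Bool) × ℕ := cseq Yf pick with hS
  set t : ℕ → (ℕ → Bool) := fun k => (S k).1 with ht
  set m : ℕ → ℕ := fun k => (S k).2 with hm
  -- every stage has step form
  have hmlt : ∀ k, m k < m (k + 1) := by
    intro k
    rw [show m (k + 1) = max (pick (S k).1 (S k).2 (k + 1)) ((S k).2 + 1) from rfl]
    exact lt_of_lt_of_le (Nat.lt_succ_self _) (le_max_right _ _)
  have hform : ∀ k, ∃ p : (ℕ → Bool) × ℕ, S k = cstep Yf pick p k ∧ p.2 < m k := by
    intro k
    cases k with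
    | zero =>
      refine ⟨(fun _ => false, 0), rfl, ?_⟩
      rw [show m 0 = max (pick (fun _ => false) 0 0) (0 + 1) from rfl]
      exact lt_of_lt_of_le Nat.zero_lt_one (le_max_right _ _)
    | succ k =>
      exact ⟨S k, rfl, hmlt k⟩
  have hmmono : ∀ a b, a ≤ b → m a ≤ m b := fun a b h =>
    (strictMono_nat_of_lt_succ hmlt).monotone h
  have hmgt : ∀ k, k < m k := by
    intro k
    induction k with
    | zero =>
      obtain ⟨p, hp, hp2⟩ := hform 0
      omega
    | succ k ih =>
      have := hmlt k
      omega
  -- basic facts about t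
  have ht_lt : ∀ k n, t k n = true → n < m k := by
    intro k n hn
    obtain ⟨p, hp, -⟩ := hform k
    have h1 : t k n = (Yf p.1 p.2 k n && decide (n < max (pick p.1 p.2 k) (p.2 + 1))) := by
      simp only [ht, hp]; rfl
    have h2 : m k = max (pick p.1 p.2 k) (p.2 + 1) := by
      simp only [hm, hp]; rfl
    rw [h1, Bool.and_eq_true, decide_eq_true_eq] at hn
    omega
  have hpick_le : ∀ k, ∃ p : (ℕ → Bool) × ℕ, S k = cstep Yf pick p k ∧
      pick p.1 p.2 k ≤ m k ∧ (∀ n < m k, t k n = Yf p.1 p.2 k n) := by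
    intro k
    obtain ⟨p, hp, -⟩ := hform k
    have h2 : m k = max (pick p.1 p.2 k) (p.2 + 1) := by simp only [hm, hp]; rfl
    have h3 : pick p.1 p.2 k ≤ max (pick p.1 p.2 k) (p.2 + 1) := le_max_left _ _
    refine ⟨p, hp, by omega, ?_⟩
    intro n hn
    have h1 : t k n = (Yf p.1 p.2 k n && decide (n < max (pick p.1 p.2 k) (p.2 + 1))) := by
      simp only [ht, hp]; rfl
    rw [h1, ← h2]
    simp [hn]
  -- agreement of later stages with earlier stages
  have hagree : ∀ k d, ∀ n, n < m k → t (k + d) n = t k n := by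
    intro k d
    induction d with
    | zero => intro n _; rfl
    | succ d ih =>
      intro n hn
      have hstep : t (k + d + 1) n =
          (Yf (t (k + d)) (m (k + d)) (k + d + 1) n &&
            decide (n < max (pick (t (k + d)) (m (k + d)) (k + d + 1)) (m (k + d) + 1))) := rfl
      have hnm : n < m (k + d) := lt_of_lt_of_le hn (hmmono k (k + d) (Nat.le_add_right _ _))
      have hnm' : ¬ (m (k + d) ≤ n) := by omega
      have hlt : n < max (pick (t (k + d)) (m (k + d)) (k + d + 1)) (m (k + d) + 1) := by
        have := le_max_right (pick (t (k + d)) (m (k + d)) (k + d + 1)) (m (k + d) + 1)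
        omega
      rw [show k + (d + 1) = k + d + 1 from rfl, hstep]
      simp only [hYf, decide_eq_false hnm', Bool.and_false, Bool.or_false,
        decide_eq_true hlt, Bool.and_true]
      exact ih n hn
  have hagree' : ∀ k j, ∀ n, n < m k → n < m j → t j n = t k n := by
    intro k j n hk hj
    rcases Nat.le_total k j with h | h
    · obtain ⟨d, rfl⟩ := Nat.exists_eq_add_of_le h
      exact hagree k d n hk
    · obtain ⟨d, rfl⟩ := Nat.exists_eq_add_of_le h
      exact (hagree j d n hj).symm
  -- the pseudo-intersection
  set B : ℕ → Bool := fun n => t (n + 1) n with hB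
  have hBt : ∀ k n, n < m k → B n = t k n := by
    intro k n hn
    exact hagree' k (n + 1) n hn (by have := hmgt (n + 1); omega)
  have hBU : ∀ k, B ∈ U k := by
    intro k
    obtain ⟨p, hp, hle, hYeq⟩ := hpick_le k
    apply hpick_spec p.1 p.2 k
    intro i hi
    have him : i < m k := lt_of_lt_of_le hi hle
    rw [hBt k i him]
    exact hYeq i him
  have hBH : B ∈ H := by
    rw [hHU]
    exact Set.mem_iInter.mpr hBU
  -- elements of t k beyond m j come from A j
  have hAQ : ∀ k j n, t k n = true → m j ≤ n → A j n = true := by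
    intro k
    induction k with
    | zero =>
      intro j n hn hjn
      exfalso
      have h1 := ht_lt 0 n hn
      have h2 := hmmono 0 j (Nat.zero_le j)
      omega
    | succ k ih =>
      intro j n hn hjn
      have hnm := ht_lt (k + 1) n hn
      have hform1 : t (k + 1) n =
          (Yf (t k) (m k) (k + 1) n &&
            decide (n < max (pick (t k) (m k) (k + 1)) (m k + 1))) := rfl
      rw [hform1, Bool.and_eq_true] at hn
      have hY := hn.1
      simp only [hYf, Bool.or_eq_true, Bool.and_eq_true, decide_eq_true_eq] at hY
      rcases hY with h | ⟨h, -⟩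
      · exact ih j n h hjn
      · have hjk : j ≤ k + 1 := by
          by_contra hc
          have : m (k + 1) ≤ m j := hmmono (k + 1) j (by omega)
          omega
        exact hmono j (k + 1) hjk n h
  refine ⟨B, hBH, ?_⟩
  intro j
  refine (Set.finite_Iio (m j)).subset ?_
  intro n hn
  simp only [Set.mem_diff, Set.mem_setOf_eq] at hn
  by_contra hc
  simp only [Set.mem_Iio, not_lt] at hc
  exact hn.2 (hAQ (n + 1) j n hn.1 hc)
end

section
/- Let X be a Banach space. The sets [F,Y]_ε (for ε > 0, F a finite-dimensional subspace of X, Y a closed subspace of X with F ⊆ Y) form a basis for a topology on the set Sub(X) of closed subspaces of X. Moreover, for Y ∈ Sub(X), the sets [F,Y]_ε with F ⊆ Y finite-dimensional and ε > 0 form a neighborhood basis of Y in this topology. -/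
/-!
The basic sets are directed at each point, which makes them a basis. Directedness comes from
refining: if `T : Z' ≃ Y` witnesses `Y ∈ [F₀, Y₀]_ε₀` with `‖T - Id‖ = δ`, then `[T F₀, Y]_ε` lies
inside `[F₀, Y₀]_ε₀` for small `ε`, because a witness `S : W' ≃ Z` of `Z ∈ [T F₀, Y]_ε` composed
with `T` on `T⁻¹ W' ⊇ F₀` is a witness of `Z ∈ [F₀, Y₀]_ε₀` with error at most `ε ‖T‖ + δ`.
Two such refinements `[F₁, Y]_ε₁`, `[F₂, Y]_ε₂` are then both refined by `[F₁ + F₂, Y]_{min ε₁ ε₂}`.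
-/

/-- The set of closed linear subspaces of a normed space. -/
def ClosedSub (E : Type) [NormedAddCommGroup E] [NormedSpace ℝ E] :=
  {Y : Submodule ℝ E // IsClosed (Y : Set E)}

/-- The basic set `[F, Y]_ε` of the Ellentuck topology: the set of closed subspaces `Z`
for which there exist a closed subspace `Z'` with `F ⊆ Z' ⊆ Y` and an isomorphism
`T : Z' → Z` with `‖T - Id_{Z'}‖ < ε`. -/
def ellSet (E : Type) [NormedAddCommGroup E] [NormedSpace ℝ E]
    (F Y : Submodule ℝ E) (ε : ℝ) : Set (ClosedSub E) :=
  {Z | ∃ Z' : Submodule ℝ E, IsClosed (Z' : Set E) ∧ F ≤ Z' ∧ Z' ≤ Y ∧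
    ∃ T : ↥Z' ≃L[ℝ] ↥Z.1,
      ‖Z.1.subtypeL.comp (T : ↥Z' →L[ℝ] ↥Z.1) - Z'.subtypeL‖ < ε}

/-- The collection of all basic sets `[F, Y]_ε` with `F` finite-dimensional,
`Y` closed with `F ⊆ Y`, and `ε > 0`. -/
def ellBasis (E : Type) [NormedAddCommGroup E] [NormedSpace ℝ E] :
    Set (Set (ClosedSub E)) :=
  {S | ∃ (F Y : Submodule ℝ E) (ε : ℝ), FiniteDimensional ℝ F ∧ IsClosed (Y : Set E) ∧
    F ≤ Y ∧ 0 < ε ∧ S = ellSet E F Y ε}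

/-- The Ellentuck topology on `Sub(E)`, generated by the sets `[F, Y]_ε`. -/
def ellTop (E : Type) [NormedAddCommGroup E] [NormedSpace ℝ E] :
    TopologicalSpace (ClosedSub E) :=
  TopologicalSpace.generateFrom (ellBasis E)

section RestrictPreimage

variable {𝕜 E : Type*} [NontriviallyNormedField 𝕜] [NormedAddCommGroup E] [NormedSpace 𝕜 E]
  {A B W : Submodule 𝕜 E}

def preimageSubspace (T : A ≃L[𝕜] B) (W : Submodule 𝕜 E) : Submodule 𝕜 E :=
  (W.comap (B.subtype ∘ₗ (T : A →ₗ[𝕜] B))).map A.subtype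

theorem mem_preimageSubspace {T : A ≃L[𝕜] B} {x : E} :
    x ∈ preimageSubspace T W ↔ ∃ hx : x ∈ A, (T ⟨x, hx⟩ : E) ∈ W := by
  simp [preimageSubspace]

theorem preimageSubspace_le (T : A ≃L[𝕜] B) (W : Submodule 𝕜 E) : preimageSubspace T W ≤ A :=
  Submodule.map_subtype_le _ _

theorem isClosed_preimageSubspace (T : A ≃L[𝕜] B) (hA : IsClosed (A : Set E))
    (hW : IsClosed (W : Set E)) : IsClosed (preimageSubspace T W : Set E) := by
  have : (preimageSubspace T W : Set E) =
      Subtype.val '' (B.subtypeL.comp (T : A →L[𝕜] B) ⁻¹' W) := by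
    ext x; simp [preimageSubspace]
  rw [this]
  exact hA.isClosedEmbedding_subtypeVal.isClosedMap _ (hW.preimage (map_continuous _))

def restrictPreimage (T : A ≃L[𝕜] B) (hW : W ≤ B) : preimageSubspace T W ≃L[𝕜] W :=
  ContinuousLinearEquiv.equivOfInverse
    ((B.subtypeL ∘L (T : A →L[𝕜] B) ∘L
        (preimageSubspace T W).subtypeL.codRestrict A fun x ↦ preimageSubspace_le T W x.2)
      |>.codRestrict W fun x ↦ (mem_preimageSubspace.1 x.2).elim fun _ hTx ↦ hTx)
    ((A.subtypeL ∘L (T.symm : B →L[𝕜] A) ∘L W.subtypeL.codRestrict B fun x ↦ hW x.2)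
      |>.codRestrict (preimageSubspace T W) fun x ↦ mem_preimageSubspace.2 ⟨by simp, by simp⟩)
    (fun x ↦ by ext; simp [ContinuousLinearMap.coe_codRestrict, Set.codRestrict])
    (fun x ↦ by ext; simp [ContinuousLinearMap.coe_codRestrict, Set.codRestrict])

@[simp]
theorem coe_restrictPreimage_apply (T : A ≃L[𝕜] B) (hW : W ≤ B) (x : preimageSubspace T W) :
    (restrictPreimage T hW x : E) = T ⟨x, preimageSubspace_le T W x.2⟩ :=
  rfl

theorem norm_restrictPreimage_trans_sub_le (T : A ≃L[𝕜] B) (hW : W ≤ B) {Z : Submodule 𝕜 E}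
    (S : W ≃L[𝕜] Z) :
    ‖Z.subtypeL ∘L ((restrictPreimage T hW).trans S : preimageSubspace T W →L[𝕜] Z) -
        (preimageSubspace T W).subtypeL‖ ≤
      ‖Z.subtypeL ∘L (S : W →L[𝕜] Z) - W.subtypeL‖ * ‖B.subtypeL ∘L (T : A →L[𝕜] B)‖ +
        ‖B.subtypeL ∘L (T : A →L[𝕜] B) - A.subtypeL‖ := by
  set η := ‖Z.subtypeL ∘L (S : W →L[𝕜] Z) - W.subtypeL‖
  set C := ‖B.subtypeL ∘L (T : A →L[𝕜] B)‖
  set δ := ‖B.subtypeL ∘L (T : A →L[𝕜] B) - A.subtypeL‖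
  refine ContinuousLinearMap.opNorm_le_bound _ (by positivity) fun x ↦ ?_
  set y := restrictPreimage T hW x
  set x' : A := ⟨x, preimageSubspace_le T W x.2⟩
  have hy : ‖y‖ ≤ C * ‖x‖ := (B.subtypeL ∘L (T : A →L[𝕜] B)).le_opNorm x'
  have hsplit : (S y : E) - x = ((S y : E) - y) + ((T x' : E) - x') := by
    simp [y, x']
  calc ‖(Z.subtypeL ∘L ((restrictPreimage T hW).trans S : preimageSubspace T W →L[𝕜] Z) -
          (preimageSubspace T W).subtypeL) x‖
      = ‖((S y : E) - y) + ((T x' : E) - x')‖ := by rw [← hsplit]; rfl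
    _ ≤ η * ‖y‖ + δ * ‖x'‖ := norm_add_le_of_le
        ((Z.subtypeL ∘L (S : W →L[𝕜] Z) - W.subtypeL).le_opNorm y)
        ((B.subtypeL ∘L (T : A →L[𝕜] B) - A.subtypeL).le_opNorm x')
    _ ≤ η * (C * ‖x‖) + δ * ‖x‖ := by gcongr; rfl
    _ = (η * C + δ) * ‖x‖ := by ring

end RestrictPreimage

section Ellentuck

variable {E : Type} [NormedAddCommGroup E] [NormedSpace ℝ E]

theorem ellSet_mono {F₁ F₂ Y : Submodule ℝ E} {ε₁ ε₂ : ℝ} (hF : F₁ ≤ F₂) (hε : ε₂ ≤ ε₁) :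
    ellSet E F₂ Y ε₂ ⊆ ellSet E F₁ Y ε₁ := by
  rintro Z ⟨Z', hZ', hFZ', hZ'Y, T, hT⟩
  exact ⟨Z', hZ', hF.trans hFZ', hZ'Y, T, hT.trans_le hε⟩

theorem self_mem_ellSet (Y : ClosedSub E) {F : Submodule ℝ E} (hF : F ≤ Y.1) {ε : ℝ}
    (hε : 0 < ε) : Y ∈ ellSet E F Y.1 ε :=
  ⟨Y.1, Y.2, hF, le_rfl, ContinuousLinearEquiv.refl ℝ Y.1, by
    simpa [ContinuousLinearMap.opNorm_zero] using hε⟩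

theorem ellSet_mem_ellBasis (Y : ClosedSub E) {F : Submodule ℝ E} [FiniteDimensional ℝ F]
    (hF : F ≤ Y.1) {ε : ℝ} (hε : 0 < ε) : ellSet E F Y.1 ε ∈ ellBasis E :=
  ⟨F, Y.1, ε, inferInstance, Y.2, hF, hε, rfl⟩

theorem exists_ellSet_subset_of_mem {F₀ Y₀ : Submodule ℝ E} [FiniteDimensional ℝ F₀] {ε₀ : ℝ}
    {Y : ClosedSub E} (hY : Y ∈ ellSet E F₀ Y₀ ε₀) :
    ∃ (F : Submodule ℝ E) (ε : ℝ), FiniteDimensional ℝ F ∧ F ≤ Y.1 ∧ 0 < ε ∧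
      ellSet E F Y.1 ε ⊆ ellSet E F₀ Y₀ ε₀ := by
  obtain ⟨Z', hZ', hF₀Z', hZ'Y₀, T, hT⟩ := hY
  set C := ‖Y.1.subtypeL ∘L (T : Z' →L[ℝ] Y.1)‖
  set δ := ‖Y.1.subtypeL ∘L (T : Z' →L[ℝ] Y.1) - Z'.subtypeL‖
  have : FiniteDimensional ℝ (F₀.comap Z'.subtype) :=
    (Submodule.comapSubtypeEquivOfLe hF₀Z').symm.finiteDimensional
  refine ⟨(F₀.comap Z'.subtype).map (Y.1.subtype ∘ₗ (T : Z' →ₗ[ℝ] Y.1)), (ε₀ - δ) / (C + 1),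
    inferInstance, ?_, div_pos (by linarith) (by positivity), ?_⟩
  · rintro _ ⟨x, -, rfl⟩
    exact (T x).2
  rintro Z ⟨W', hW', hFW', hW'Y, S, hS⟩
  refine ⟨preimageSubspace T W', isClosed_preimageSubspace T hZ' hW',
    fun x hx ↦ mem_preimageSubspace.2 ⟨hF₀Z' hx, hFW' ⟨⟨x, hF₀Z' hx⟩, hx, rfl⟩⟩,
    (preimageSubspace_le T W').trans hZ'Y₀, (restrictPreimage T hW'Y).trans S, ?_⟩
  refine (norm_restrictPreimage_trans_sub_le T hW'Y S).trans_lt ?_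
  have hε : (ε₀ - δ) / (C + 1) * (C + 1) = ε₀ - δ := div_mul_cancel₀ _ (by positivity)
  nlinarith [norm_nonneg (Z.1.subtypeL ∘L (S : W' →L[ℝ] Z.1) - W'.subtypeL),
    norm_nonneg (Y.1.subtypeL ∘L (T : Z' →L[ℝ] Y.1))]

theorem isTopologicalBasis_ellBasis :
    @TopologicalSpace.IsTopologicalBasis (ClosedSub E) (ellTop E) (ellBasis E) := by
  let := ellTop E
  refine ⟨?_, ?_, rfl⟩
  · rintro _ ⟨F₁, Y₁, ε₁, hF₁, -, -, -, rfl⟩ _ ⟨F₂, Y₂, ε₂, hF₂, -, -, -, rfl⟩ Y ⟨hY₁, hY₂⟩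
    obtain ⟨G₁, δ₁, hG₁, hG₁Y, hδ₁, hsub₁⟩ := exists_ellSet_subset_of_mem hY₁
    obtain ⟨G₂, δ₂, hG₂, hG₂Y, hδ₂, hsub₂⟩ := exists_ellSet_subset_of_mem hY₂
    have hGY := sup_le hG₁Y hG₂Y
    have hδ := lt_min hδ₁ hδ₂
    exact ⟨_, ellSet_mem_ellBasis Y hGY hδ, self_mem_ellSet Y hGY hδ, fun Z hZ ↦
      ⟨hsub₁ (ellSet_mono le_sup_left (min_le_left _ _) hZ),
        hsub₂ (ellSet_mono le_sup_right (min_le_right _ _) hZ)⟩⟩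
  · exact Set.eq_univ_of_forall fun Y ↦
      ⟨_, ellSet_mem_ellBasis Y bot_le one_pos, self_mem_ellSet Y bot_le one_pos⟩

end Ellentuck

theorem statement3_general (E : Type) [NormedAddCommGroup E] [NormedSpace ℝ E] :
    (@TopologicalSpace.IsTopologicalBasis (ClosedSub E) (ellTop E) (ellBasis E)) ∧
    ∀ (Y : ClosedSub E) (S : Set (ClosedSub E)),
      S ∈ @nhds _ (ellTop E) Y ↔
        ∃ (F : Submodule ℝ E) (ε : ℝ), FiniteDimensional ℝ F ∧ F ≤ Y.1 ∧ 0 < ε ∧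
          ellSet E F Y.1 ε ⊆ S := by
  refine ⟨isTopologicalBasis_ellBasis, fun Y S ↦ ?_⟩
  rw [@TopologicalSpace.IsTopologicalBasis.mem_nhds_iff _ (ellTop E) _ _ _
    isTopologicalBasis_ellBasis]
  constructor
  · rintro ⟨_, ⟨F₀, Y₀, ε₀, hF₀, -, -, -, rfl⟩, hY, hS⟩
    obtain ⟨F, ε, hF, hFY, hε, hsub⟩ := exists_ellSet_subset_of_mem hY
    exact ⟨F, ε, hF, hFY, hε, hsub.trans hS⟩
  · rintro ⟨F, ε, hF, hFY, hε, hS⟩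
    exact ⟨_, ellSet_mem_ellBasis Y hFY hε, self_mem_ellSet Y hFY hε, hS⟩

theorem statement3 (E : Type) [NormedAddCommGroup E] [NormedSpace ℝ E] [CompleteSpace E] :
    (@TopologicalSpace.IsTopologicalBasis (ClosedSub E) (ellTop E) (ellBasis E)) ∧
    ∀ (Y : ClosedSub E) (S : Set (ClosedSub E)),
      S ∈ @nhds _ (ellTop E) Y ↔
        ∃ (F : Submodule ℝ E) (ε : ℝ), FiniteDimensional ℝ F ∧ F ≤ Y.1 ∧ 0 < ε ∧
          ellSet E F Y.1 ε ⊆ S :=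
  statement3_general E
end

section
/- Let H be a D-family of subspaces of a Banach space X, and let (Y_n) be a decreasing sequence of elements of H. Then there exists Y_∞ ∈ H such that for every n, Y_∞ is almost contained in Y_n (i.e. some finite-codimensional subspace of Y_∞ is contained in Y_n). -/
/-- A D-family of subspaces of `E`: a family of infinite-dimensional closed subspaces
which is stable under finite-dimensional modifications and `G_δ` for the Ellentuck
topology. -/
def DFamily (E : Type) [NormedAddCommGroup E] [NormedSpace ℝ E]
    (H : Set (ClosedSub E)) : Prop :=
  (∀ Y ∈ H, ¬ FiniteDimensional ℝ Y.1) ∧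
  (∀ Y Z : ClosedSub E,
    (∃ F : Submodule ℝ E, FiniteDimensional ℝ F ∧ Z.1 = Y.1 ⊔ F) → (Y ∈ H ↔ Z ∈ H)) ∧
  @IsGδ _ (ellTop E) H

/-- `V ⊆* W`: some finite-codimensional subspace of `V` is contained in `W`. -/
def AlmostContained {E : Type} [NormedAddCommGroup E] [NormedSpace ℝ E]
    (V W : Submodule ℝ E) : Prop :=
  ∃ Z : Submodule ℝ ↥V, FiniteDimensional ℝ (↥V ⧸ Z) ∧ Z.map V.subtype ≤ W

/-! Every Ellentuck-open set containing `Z` contains a whole interval `[G, Z]` of closed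
subspaces with `G` finite-dimensional: for a basic set `[F, Y]_ε` witnessed by `T : Z' → Z`,
take `G = T F` and, for `G ≤ W ≤ Z`, restrict `T` to `T⁻¹ W`. Write `H = ⋂ₖ Oₖ` with `Oₖ` open.
Since `Yₖ + c ∈ H ⊆ Oₖ` for finite-dimensional `c`, we can choose finite-dimensional
`c₀ = 0 ≤ c₁ ≤ ⋯` with `[c_{k+1}, Yₖ + cₖ] ⊆ Oₖ`. The closed span `W` of all `cₖ` lies in the
closed subspace `Yₖ + cₖ` for every `k`, hence `W ∈ Oₖ` for all `k`, and `W ⊆* Yₖ`. -/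

open Topology

variable {E : Type} [NormedAddCommGroup E] [NormedSpace ℝ E]

theorem almostContained_of_le_sup {V W F : Submodule ℝ E} [FiniteDimensional ℝ F]
    (h : V ≤ W ⊔ F) : AlmostContained V W := by
  let φ : V →ₗ[ℝ] E ⧸ W := W.mkQ ∘ₗ V.subtype
  have hker : LinearMap.ker φ = W.comap V.subtype := by
    rw [LinearMap.ker_comp, Submodule.ker_mkQ]
  have hrange : LinearMap.range φ ≤ F.map W.mkQ := by
    rintro _ ⟨v, rfl⟩
    obtain ⟨w, hw, f, hf, hwf⟩ := Submodule.mem_sup.mp (h v.2)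
    refine ⟨f, hf, ?_⟩
    simp [φ, ← hwf, hw]
  have : FiniteDimensional ℝ (LinearMap.range φ) := Submodule.finiteDimensional_of_le hrange
  refine ⟨W.comap V.subtype, ?_, Submodule.map_comap_le _ _⟩
  exact hker ▸ φ.quotKerEquivRange.symm.finiteDimensional

theorem Monotone.le_sup_of_succ_le_sup {α : Type*} [Lattice α] {c Y : ℕ → α}
    (hc : Monotone c) (hY : Antitone Y) (hstep : ∀ j, c (j + 1) ≤ Y j ⊔ c j) (j k : ℕ) :
    c j ≤ Y k ⊔ c k := by
  induction j with
  | zero => exact (hc (Nat.zero_le k)).trans le_sup_right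
  | succ j ih =>
    rcases le_or_gt (j + 1) k with hjk | hkj
    · exact (hc hjk).trans le_sup_right
    · exact (hstep j).trans (sup_le ((hY (Nat.lt_succ_iff.mp hkj)).trans le_sup_left) ih)

theorem ContinuousLinearEquiv.exists_restrict_comap {Z' Z W : Submodule ℝ E}
    (T : Z' ≃L[ℝ] Z) (hWZ : W ≤ Z) :
    ∃ S : ↥((W.comap (Z.subtype ∘ₗ (T : Z' →ₗ[ℝ] Z))).map Z'.subtype) ≃L[ℝ] W,
      ∀ x, (S x : E) = T ⟨x, Submodule.map_subtype_le _ _ x.2⟩ := by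
  set Z'' := (W.comap (Z.subtype ∘ₗ (T : Z' →ₗ[ℝ] Z))).map Z'.subtype
  let toZ' : Z'' →L[ℝ] Z' :=
    Z''.subtypeL.codRestrict Z' (fun x => Submodule.map_subtype_le _ _ x.2)
  let toZ : W →L[ℝ] Z := W.subtypeL.codRestrict Z (fun w => hWZ w.2)
  let toW : Z'' →L[ℝ] W := (Z.subtypeL ∘L (T : Z' →L[ℝ] Z) ∘L toZ').codRestrict W
    (by rintro ⟨_, y, hy, rfl⟩; exact hy)
  let ofW : W →L[ℝ] Z'' := (Z'.subtypeL ∘L (T.symm : Z →L[ℝ] Z') ∘L toZ).codRestrict Z''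
    (fun w => ⟨_, by simp [toZ], rfl⟩)
  refine ⟨.equivOfInverse toW ofW (fun x => ?_) (fun w => ?_), fun x => rfl⟩
  · apply Subtype.ext
    change ((T.symm (T (toZ' x)) : Z') : E) = x
    rw [T.symm_apply_apply]; rfl
  · apply Subtype.ext
    change ((T (T.symm (toZ w)) : Z) : E) = w
    rw [T.apply_symm_apply]; rfl

def ClosedSub.Icc (G V : Submodule ℝ E) : Set (ClosedSub E) := {W | G ≤ W.1 ∧ W.1 ≤ V}

theorem exists_Icc_subset_ellSet {F Y : Submodule ℝ E} {ε : ℝ} [FiniteDimensional ℝ F]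
    {Z : ClosedSub E} (hZ : Z ∈ ellSet E F Y ε) :
    ∃ G : Submodule ℝ E,
      FiniteDimensional ℝ G ∧ G ≤ Z.1 ∧ ClosedSub.Icc G Z.1 ⊆ ellSet E F Y ε := by
  obtain ⟨Z', hZ'closed, hFZ', hZ'Y, T, hT⟩ := hZ
  set A : Z' →L[ℝ] E := Z.1.subtypeL ∘L (T : Z' →L[ℝ] Z.1)
  have : FiniteDimensional ℝ (F.comap Z'.subtype) :=
    (Submodule.comapSubtypeEquivOfLe hFZ').symm.finiteDimensional
  refine ⟨(F.comap Z'.subtype).map (A : Z' →ₗ[ℝ] E), inferInstance, ?_, ?_⟩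
  · rintro _ ⟨x, -, rfl⟩
    exact (T x).2
  rintro W ⟨hGW, hWZ⟩
  set Z'' := (W.1.comap (Z.1.subtype ∘ₗ (T : Z' →ₗ[ℝ] Z.1))).map Z'.subtype
  obtain ⟨S, hS⟩ := T.exists_restrict_comap hWZ
  have hZ''closed : IsClosed (Z'' : Set E) := by
    have : (Z'' : Set E) = Subtype.val '' (A ⁻¹' W.1) := Submodule.map_coe _ _
    rw [this]
    exact hZ'closed.isClosedEmbedding_subtypeVal.isClosedMap _ (W.2.preimage A.continuous)
  have hFZ'' : F ≤ Z'' := fun x hx => ⟨⟨x, hFZ' hx⟩, hGW ⟨⟨x, hFZ' hx⟩, hx, rfl⟩, rfl⟩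
  refine ⟨Z'', hZ''closed, hFZ'', (Submodule.map_subtype_le _ _).trans hZ'Y, S, hT.trans_le' ?_⟩
  refine ContinuousLinearMap.opNorm_le_bound _ (norm_nonneg (A - Z'.subtypeL)) fun x => ?_
  have : (W.1.subtypeL ∘L (S : Z'' →L[ℝ] W.1) - Z''.subtypeL) x
      = (A - Z'.subtypeL) ⟨x, Submodule.map_subtype_le _ _ x.2⟩ := by
    simp [A, hS]
  rw [this]
  exact (A - Z'.subtypeL).le_opNorm _

theorem exists_Icc_subset_of_isOpen {O : Set (ClosedSub E)} (hO : IsOpen[ellTop E] O)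
    {Z : ClosedSub E} (hZ : Z ∈ O) :
    ∃ G : Submodule ℝ E, FiniteDimensional ℝ G ∧ G ≤ Z.1 ∧ ClosedSub.Icc G Z.1 ⊆ O := by
  induction hO generalizing Z with
  | basic s hs =>
    obtain ⟨F, Y, ε, hF, -, -, -, rfl⟩ := hs
    exact exists_Icc_subset_ellSet hZ
  | univ => exact ⟨⊥, inferInstance, bot_le, Set.subset_univ _⟩
  | inter s t _ _ ihs iht =>
    obtain ⟨G₁, _, hG₁Z, hG₁⟩ := ihs hZ.1
    obtain ⟨G₂, _, hG₂Z, hG₂⟩ := iht hZ.2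
    refine ⟨G₁ ⊔ G₂, inferInstance, sup_le hG₁Z hG₂Z, fun W hW => ⟨?_, ?_⟩⟩
    · exact hG₁ ⟨le_sup_left.trans hW.1, hW.2⟩
    · exact hG₂ ⟨le_sup_right.trans hW.1, hW.2⟩
  | sUnion S _ ih =>
    obtain ⟨s, hsS, hZs⟩ := hZ
    obtain ⟨G, hG, hGZ, hGs⟩ := ih s hsS hZs
    exact ⟨G, hG, hGZ, hGs.trans (Set.subset_sUnion_of_mem hsS)⟩

theorem exists_forall_mem_of_Icc_subset [CompleteSpace E] {O : ℕ → Set (ClosedSub E)}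
    {Y : ℕ → ClosedSub E} (hY : Antitone fun k => (Y k).1)
    (hO : ∀ k (c : Submodule ℝ E), FiniteDimensional ℝ c → ∃ G : Submodule ℝ E,
      FiniteDimensional ℝ G ∧ G ≤ (Y k).1 ⊔ c ∧ ClosedSub.Icc G ((Y k).1 ⊔ c) ⊆ O k) :
    ∃ W : ClosedSub E, (∀ k, W ∈ O k) ∧
      ∀ k, ∃ c : Submodule ℝ E, FiniteDimensional ℝ c ∧ W.1 ≤ (Y k).1 ⊔ c := by
  choose G hGfd hGle hGO using hO
  let c : ℕ → {c : Submodule ℝ E // FiniteDimensional ℝ c} := fun k =>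
    k.rec ⟨⊥, inferInstance⟩ fun k c =>
      ⟨G k c c.2 ⊔ c, have := hGfd k c c.2; have := c.2; inferInstance⟩
  have hc_mono : Monotone fun k => (c k).1 := monotone_nat_of_le_succ fun k => le_sup_right
  have hc_step : ∀ k, (c (k + 1)).1 ≤ (Y k).1 ⊔ (c k).1 := fun k =>
    sup_le (hGle k _ _) le_sup_right
  let W : ClosedSub E :=
    ⟨(⨆ k, (c k).1).topologicalClosure, Submodule.isClosed_topologicalClosure _⟩
  have hW_le : ∀ k, W.1 ≤ (Y k).1 ⊔ (c k).1 := fun k =>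
    Submodule.topologicalClosure_minimal _
      (iSup_le fun j => hc_mono.le_sup_of_succ_le_sup hY hc_step j k)
      (have := (c k).2; (Y k).1.isClosed_sup_finiteDimensional _ (Y k).2)
  have hc_le : ∀ k, (c (k + 1)).1 ≤ W.1 := fun k =>
    (le_iSup (fun j => (c j).1) (k + 1)).trans (Submodule.le_topologicalClosure _)
  refine ⟨W, fun k => hGO k _ _ ⟨le_sup_left.trans (hc_le k), hW_le k⟩,
    fun k => ⟨_, (c k).2, hW_le k⟩⟩

/-- diagonalization in D-families: every decreasing sequence of members of a
D-family `H` admits a member of `H` almost contained in all of them. -/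
theorem statement5 (E : Type) [NormedAddCommGroup E] [NormedSpace ℝ E] [CompleteSpace E]
    (H : Set (ClosedSub E)) (hH : DFamily E H)
    (Y : ℕ → ClosedSub E) (hYH : ∀ n, Y n ∈ H)
    (hdec : ∀ n, (Y (n + 1)).1 ≤ (Y n).1) :
    ∃ Z ∈ H, ∀ n, AlmostContained Z.1 (Y n).1 := by
  obtain ⟨-, hH_fin, hH_Gδ⟩ := hH
  obtain ⟨O, hO_open, rfl⟩ := (@isGδ_iff_eq_iInter_nat _ (ellTop E) _).mp hH_Gδ
  obtain ⟨W, hW_mem, hW_le⟩ :=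
    exists_forall_mem_of_Icc_subset (antitone_nat_of_succ_le hdec) fun k c hc => by
      let M : ClosedSub E := ⟨(Y k).1 ⊔ c, (Y k).1.isClosed_sup_finiteDimensional c (Y k).2⟩
      have hM : M ∈ ⋂ n, O n := (hH_fin (Y k) M ⟨c, hc, rfl⟩).mp (hYH k)
      exact exists_Icc_subset_of_isOpen (hO_open k) (Set.mem_iInter.mp hM k)
  refine ⟨W, Set.mem_iInter.mpr hW_mem, fun n => ?_⟩
  obtain ⟨c, _, hWc⟩ := hW_le n
  exact almostContained_of_le_sup hWc
end

section
/- For every degree d and every n ∈ ℕ there exists a constant C_d(n) such that for every approximation pair (X,F) with dim(F) = n we have d(X,F) ≤ C_d(n). In particular, every finite-dimensional normed space is d-small. -/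
/-- A degree: a map `d` assigning to each approximation pair `(X, F)` (a Banach space `X`
together with a finite-dimensional subspace `F`) a nonnegative real, admitting a control
function `K`, non-decreasing in both variables with `lim_{s → 1⁺} K(s, t) = t`, such that
`d(Y, G) ≤ K(‖φ‖, d(X, F))` for every morphism `φ = (S, T) : (X, F) → (Y, G)`
(with the convention `‖φ‖ = 1` when `G = 0`). -/
structure Degree where
  d : ∀ (X : Type) [NormedAddCommGroup X] [NormedSpace ℝ X] [CompleteSpace X],
    Submodule ℝ X → ℝ
  nonneg : ∀ (X : Type) [NormedAddCommGroup X] [NormedSpace ℝ X] [CompleteSpace X]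
    (F : Submodule ℝ X), 0 ≤ d X F
  K : ℝ → ℝ → ℝ
  K_mono : ∀ ⦃s s' t t' : ℝ⦄, 1 ≤ s → s ≤ s' → 0 ≤ t → t ≤ t' → K s t ≤ K s' t'
  K_lim : ∀ t : ℝ, 0 ≤ t →
    Filter.Tendsto (fun s => K s t) (nhdsWithin 1 (Set.Ioi 1)) (nhds t)
  bound : ∀ (X : Type) [NormedAddCommGroup X] [NormedSpace ℝ X] [CompleteSpace X]
    (Y : Type) [NormedAddCommGroup Y] [NormedSpace ℝ Y] [CompleteSpace Y]
    (F : Submodule ℝ X) (G : Submodule ℝ Y),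
    FiniteDimensional ℝ F → FiniteDimensional ℝ G →
    ∀ (S : ↥G →L[ℝ] ↥F) (T : X →L[ℝ] Y),
    (∀ g : ↥G, T ((S g : X)) = (g : Y)) →
    d Y G ≤ K (@ite ℝ (G = ⊥) (Classical.dec _) 1 (‖S‖ * ‖T‖)) (d X F)

/-- A Banach space is `d`-small if the degrees of its finite-dimensional subspaces are
uniformly bounded. -/
def DSmall (D : Degree) (X : Type) [NormedAddCommGroup X] [NormedSpace ℝ X]
    [CompleteSpace X] : Prop :=
  ∃ M : ℝ, ∀ F : Submodule ℝ X, FiniteDimensional ℝ F → D.d X F ≤ M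

/-- A Banach space is `d`-large if it is not `d`-small. -/
def DLarge (D : Degree) (X : Type) [NormedAddCommGroup X] [NormedSpace ℝ X]
    [CompleteSpace X] : Prop :=
  ¬ DSmall D X

/-- A Banach space `X` is asymptotically `d`-small if there is `K` such that for every `n`
there is a finite-codimensional (closed) subspace `X_n ⊆ X` with `d(X, F) ≤ K` for every
`n`-dimensional subspace `F ⊆ X_n`. -/
def AsympDSmall (D : Degree) (X : Type) [NormedAddCommGroup X] [NormedSpace ℝ X]
    [CompleteSpace X] : Prop :=
  ∃ K : ℝ, ∀ n : ℕ, ∃ Xn : Submodule ℝ X, IsClosed (Xn : Set X) ∧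
    FiniteDimensional ℝ (X ⧸ Xn) ∧
    ∀ F : Submodule ℝ X, F ≤ Xn → FiniteDimensional ℝ F →
      Module.finrank ℝ F = n → D.d X F ≤ K


/-
Every `n`-dimensional normed space `E` factors through `ℓ∞ⁿ = (Fin n → ℝ)` (sup norm) as
`id_E = u ∘ v` with `‖v‖ ≤ 2ⁿ` and `‖u‖ ≤ n`: pick a unit vector `e` and a norm-one functional
`f` with `f e = 1` (Hahn–Banach), send `x` to `(f x, v' (x - f x • e))` where `v'` is the
factorization of `ker f` given by induction, and map back by `(a, y) ↦ a • e + u' y`.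
Applied to `E = F`, this is a morphism `(ℓ∞ⁿ, ℓ∞ⁿ) → (X, F)` of norm at most `2ⁿ n`, so
`d(X, F) ≤ K(max 1 (2ⁿ n), d(ℓ∞ⁿ, ℓ∞ⁿ))`. A finite-dimensional `X` only has subspaces of
dimension at most `dim X`, so finitely many of these constants bound all of its degrees.
-/

open Module

theorem Fin.norm_tail_le {α : Type*} [SeminormedAddGroup α] {n : ℕ} (y : Fin (n + 1) → α) :
    ‖Fin.tail y‖ ≤ ‖y‖ :=
  (pi_norm_le_iff_of_nonneg (norm_nonneg y)).2 fun i => norm_le_pi_norm y i.succ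

theorem exists_factorization_pi_succ_of_ker {E : Type*} [NormedAddCommGroup E]
    [NormedSpace ℝ E] {n : ℕ} (f : StrongDual ℝ E) (e : E) (hf : ‖f‖ ≤ 1)
    (he : ‖e‖ ≤ 1) (hfe : f e = 1) (v' : LinearMap.ker (f : E →ₗ[ℝ] ℝ) →L[ℝ] (Fin n → ℝ))
    (u' : (Fin n → ℝ) →L[ℝ] LinearMap.ker (f : E →ₗ[ℝ] ℝ)) (huv' : ∀ x, u' (v' x) = x) :
    ∃ (v : E →L[ℝ] (Fin (n + 1) → ℝ)) (u : (Fin (n + 1) → ℝ) →L[ℝ] E),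
      (∀ x, u (v x) = x) ∧ ‖v‖ ≤ max 1 (2 * ‖v'‖) ∧ ‖u‖ ≤ 1 + ‖u'‖ := by
  let Q : E →L[ℝ] E := ContinuousLinearMap.id ℝ E - f.smulRight e
  let P : E →L[ℝ] LinearMap.ker (f : E →ₗ[ℝ] ℝ) := Q.codRestrict _ fun x => by simp [Q, hfe]
  have hP : ‖P‖ ≤ 2 := calc
    ‖P‖ = ‖Q‖ := ContinuousLinearMap.opNorm_ext _ _ fun _ => rfl
    _ ≤ 1 + ‖f‖ * ‖e‖ := by
      grw [norm_sub_le, ContinuousLinearMap.norm_smulRight_apply, ContinuousLinearMap.norm_id_le]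
    _ ≤ 2 := by nlinarith [norm_nonneg f, norm_nonneg e]
  let v : E →L[ℝ] (Fin (n + 1) → ℝ) := f.finCons (v' ∘L P)
  let u : (Fin (n + 1) → ℝ) →L[ℝ] E :=
    ((ContinuousLinearMap.id ℝ ℝ).smulRight e).coprod
      ((LinearMap.ker (f : E →ₗ[ℝ] ℝ)).subtypeL ∘L u') ∘L
      (Fin.consEquivL ℝ fun _ => ℝ).symm.toContinuousLinearMap
  refine ⟨v, u, fun x => ?_, ?_, ?_⟩
  · simp [u, v, huv', P, Q]
  · refine ContinuousLinearMap.opNorm_le_bound _ (by positivity) fun x => ?_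
    refine (pi_norm_le_iff_of_nonneg (by positivity)).2 fun i => ?_
    refine Fin.cases ?_ (fun i => ?_) i
    · calc ‖f x‖ ≤ ‖f‖ * ‖x‖ := f.le_opNorm x
        _ ≤ max 1 (2 * ‖v'‖) * ‖x‖ := by gcongr; exact hf.trans (le_max_left _ _)
    · calc ‖v' (P x) i‖ ≤ ‖v' (P x)‖ := norm_le_pi_norm _ i
        _ ≤ ‖v'‖ * (‖P‖ * ‖x‖) := by grw [v'.le_opNorm, P.le_opNorm]
        _ ≤ max 1 (2 * ‖v'‖) * ‖x‖ := by
          grw [hP, ← le_max_right]; exact le_of_eq (by ring)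
  · refine ContinuousLinearMap.opNorm_le_bound _ (by positivity) fun y => ?_
    calc ‖y 0 • e + (u' (Fin.tail y) : E)‖ ≤ ‖y 0‖ * ‖e‖ + ‖u'‖ * ‖Fin.tail y‖ := by
          grw [norm_add_le, norm_smul]; exact add_le_add le_rfl (u'.le_opNorm _)
      _ ≤ (1 + ‖u'‖) * ‖y‖ := by
          grw [he, norm_le_pi_norm y 0, Fin.norm_tail_le]; exact le_of_eq (by ring)

theorem exists_factorization_pi_of_finrank_eq (n : ℕ) :
    ∀ (E : Type*) [NormedAddCommGroup E] [NormedSpace ℝ E] [FiniteDimensional ℝ E],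
      finrank ℝ E = n → ∃ (v : E →L[ℝ] (Fin n → ℝ)) (u : (Fin n → ℝ) →L[ℝ] E),
        (∀ x, u (v x) = x) ∧ ‖v‖ ≤ 2 ^ n ∧ ‖u‖ ≤ n := by
  induction n with
  | zero =>
    intro E _ _ _ hE
    have : Subsingleton E := finrank_zero_iff.1 hE
    exact ⟨0, 0, fun x => Subsingleton.elim _ _, by simp, by simp⟩
  | succ n ih =>
    intro E _ _ _ hE
    have : Nontrivial E := Module.nontrivial_of_finrank_eq_succ hE
    obtain ⟨x, hx⟩ := exists_ne (0 : E)
    set e : E := ‖x‖⁻¹ • x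
    have he : ‖e‖ = 1 := norm_smul_inv_norm hx
    obtain ⟨f, hf, hfe⟩ := exists_dual_vector ℝ e (by simp [he])
    rw [he] at hfe
    have hf0 : (f : Module.Dual ℝ E) ≠ 0 := fun h =>
      one_ne_zero (hfe.symm.trans (LinearMap.congr_fun h e))
    have hker : finrank ℝ (LinearMap.ker (f : E →ₗ[ℝ] ℝ)) = n := by
      have := Module.Dual.finrank_ker_add_one_of_ne_zero hf0; omega
    obtain ⟨v', u', huv', hv', hu'⟩ := ih _ hker
    obtain ⟨v, u, huv, hv, hu⟩ := exists_factorization_pi_succ_of_ker f e hf.le he.le hfe v' u' huv'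
    refine ⟨v, u, huv, hv.trans (max_le ?_ ?_), hu.trans ?_⟩
    · exact one_le_pow₀ one_le_two
    · grw [hv']; exact le_of_eq (by ring)
    · grw [hu']; push_cast; exact le_of_eq (by ring)

namespace Degree

theorem d_le_K_of_factorization (D : Degree) {Z X : Type} [NormedAddCommGroup Z]
    [NormedSpace ℝ Z] [CompleteSpace Z] [FiniteDimensional ℝ Z] [NormedAddCommGroup X]
    [NormedSpace ℝ X] [CompleteSpace X] (F : Submodule ℝ X) [FiniteDimensional ℝ F]
    (v : F →L[ℝ] Z) (u : Z →L[ℝ] F) (huv : ∀ x, u (v x) = x) {c : ℝ}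
    (hc : ‖v‖ * ‖u‖ ≤ c) :
    D.d X F ≤ D.K (max 1 c) (D.d Z ⊤) := by
  let S : F →L[ℝ] (⊤ : Submodule ℝ Z) := v.codRestrict ⊤ fun _ => trivial
  let T : Z →L[ℝ] X := F.subtypeL ∘L u
  have hST : ‖S‖ * ‖T‖ = ‖v‖ * ‖u‖ := by
    rw [ContinuousLinearMap.opNorm_ext S v fun _ => rfl,
      ContinuousLinearMap.opNorm_ext T u fun _ => rfl]
  have hTS : ∀ g : F, T (S g : Z) = g := fun g => congrArg Subtype.val (huv g)
  refine (D.bound Z X ⊤ F inferInstance inferInstance S T hTS).trans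
    (D.K_mono ?_ ?_ (D.nonneg _ _) le_rfl)
  · split_ifs with hF
    · exact le_rfl
    · have : Nontrivial F := Submodule.nontrivial_iff_ne_bot.2 hF
      calc (1 : ℝ) = ‖ContinuousLinearMap.id ℝ F‖ := ContinuousLinearMap.norm_id.symm
        _ = ‖u ∘L v‖ := by congr 1; ext x; simp [huv]
        _ ≤ ‖S‖ * ‖T‖ := by rw [hST, mul_comm]; exact ContinuousLinearMap.opNorm_comp_le u v
  · split_ifs
    · exact le_max_left _ _
    · exact hST ▸ hc.trans (le_max_right _ _)

theorem exists_bound_of_finrank_eq (D : Degree) (n : ℕ) : ∃ C : ℝ,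
    ∀ (X : Type) [NormedAddCommGroup X] [NormedSpace ℝ X] [CompleteSpace X]
      (F : Submodule ℝ X), FiniteDimensional ℝ F → finrank ℝ F = n → D.d X F ≤ C := by
  refine ⟨D.K (max 1 (2 ^ n * n)) (D.d (Fin n → ℝ) ⊤), fun X _ _ _ F _ hF => ?_⟩
  obtain ⟨v, u, huv, hv, hu⟩ := exists_factorization_pi_of_finrank_eq n F hF
  exact D.d_le_K_of_factorization F v u huv (by gcongr)

theorem dSmall_of_finiteDimensional (D : Degree) (X : Type) [NormedAddCommGroup X]
    [NormedSpace ℝ X] [CompleteSpace X] [FiniteDimensional ℝ X] : DSmall D X := by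
  choose C hC using D.exists_bound_of_finrank_eq
  obtain ⟨M, hM⟩ := ((Set.finite_Iic (finrank ℝ X)).image C).bddAbove
  exact ⟨M, fun F _ => (hC _ X F ‹_› rfl).trans
    (hM ⟨finrank ℝ F, Submodule.finrank_le F, rfl⟩)⟩

end Degree

/-- for every degree `d` and `n ∈ ℕ` there is a constant `C_d(n)` bounding
`d(X, F)` over all approximation pairs with `dim F = n`; in particular every
finite-dimensional normed space is `d`-small. -/
theorem statement7 (D : Degree) :
    (∀ n : ℕ, ∃ C : ℝ,
      ∀ (X : Type) [NormedAddCommGroup X] [NormedSpace ℝ X] [CompleteSpace X]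
        (F : Submodule ℝ X), FiniteDimensional ℝ F → Module.finrank ℝ F = n →
        D.d X F ≤ C) ∧
    (∀ (X : Type) [NormedAddCommGroup X] [NormedSpace ℝ X] [CompleteSpace X],
      FiniteDimensional ℝ X → DSmall D X) :=
  ⟨D.exists_bound_of_finrank_eq, fun X _ _ _ _ => D.dSmall_of_finiteDimensional X⟩
end

section
/- Let d be a degree, X a Banach space, and Y a finite-codimensional closed subspace of X. Then X is d-small if and only if Y is d-small, and X is asymptotically d-small if and only if Y is asymptotically d-small. -/
/-!
A closed finite-codimensional subspace `Y` is complemented by a bounded projection `P`, so a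
finite-dimensional subspace of `Y` has comparable degrees in `Y` and in `X`: the inclusion and `P`
give morphisms both ways. This yields every implication except that `X` is `d`-small when `Y` is.

For that one, write `x = P x + ι (q x)` with `q : X → Z := X ⧸ Y` the quotient map, `Z`
finite-dimensional, and assume `Y` is infinite-dimensional. Given a finite-dimensional `F ⊆ X`,
iterated Hahn–Banach produces a copy `j(Z)` of `Z` in `Y` with a retraction `ρ : Y → Z` vanishing
on `P(F)`, both bounded independently of `F`. Then `A x = P x + j (q x)` maps `F` into `Y`,
`T y = y - j (ρ y) + ι (ρ y)` inverts it on `F`, and `‖A‖ ‖T‖` is bounded independently of `F`,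
so `d(X, F)` is controlled by a degree in `Y`.
-/

namespace Submodule

variable {R M N : Type*} [Ring R] [AddCommGroup M] [Module R M] [AddCommGroup N] [Module R N]

theorem CoFG.comap [IsNoetherianRing R] {S : Submodule R N} (hS : S.CoFG) (f : M →ₗ[R] N) :
    (S.comap f).CoFG := by
  simpa [LinearMap.ker_comp] using CoFG.ker (S.mkQ ∘ₗ f)

theorem CoFG.map_subtype {Y : Submodule R M} {Yn : Submodule R Y} (hY : Y.CoFG) (hYn : Yn.CoFG) :
    (Yn.map Y.subtype).CoFG := by
  set S := Yn.map Y.subtype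
  have hker : LinearMap.ker (S.mkQ ∘ₗ Y.subtype) = Yn := by
    rw [LinearMap.ker_comp, ker_mkQ, comap_map_eq_of_injective Y.injective_subtype]
  have : Module.Finite R (Y.map S.mkQ) := by
    rw [Module.Finite.iff_fg, ← range_subtype Y, ← LinearMap.range_comp, range_fg_iff_ker_cofg,
      hker]
    exact hYn
  have : Module.Finite R ((M ⧸ S) ⧸ Y.map S.mkQ) :=
    Module.Finite.equiv (quotientQuotientEquivQuotient S Y (map_subtype_le Y Yn)).symm
  exact Module.Finite.of_submodule_quotient (Y.map S.mkQ)

end Submodule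

section Factorization

variable {E : Type*} [NormedAddCommGroup E] [NormedSpace ℝ E]

theorem exists_dual_pair_of_ne_top {A : Submodule ℝ E} (hA : IsClosed (A : Set E))
    (hA_top : A ≠ ⊤) :
    ∃ (w : E) (ψ : StrongDual ℝ E), ψ w = 1 ∧ (∀ a ∈ A, ψ a = 0) ∧ ‖w‖ ≤ 2 ∧ ‖ψ‖ ≤ 1 := by
  have : Nontrivial (E ⧸ A) := Submodule.Quotient.nontrivial_iff.2 hA_top
  obtain ⟨u, hu⟩ := exists_norm_eq (E ⧸ A) zero_le_one
  obtain ⟨w, rfl, hw⟩ := Submodule.Quotient.norm_mk_lt u one_pos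
  obtain ⟨g, hg, hgu⟩ := exists_dual_vector ℝ _ (hu ▸ one_ne_zero)
  refine ⟨w, g ∘L A.mkQL, by simpa [hu] using hgu, fun a ha => ?_, by linarith, ?_⟩
  · simp [(Submodule.Quotient.mk_eq_zero A).2 ha]
  · refine ContinuousLinearMap.opNorm_le_bound _ zero_le_one fun x => ?_
    calc ‖g (A.mkQ x)‖ ≤ ‖g‖ * ‖A.mkQ x‖ := g.le_opNorm _
      _ ≤ 1 * ‖x‖ := by rw [hg, one_mul, one_mul]; exact Submodule.Quotient.norm_mk_le A x

theorem exists_biorthogonal_of_not_finiteDimensional (hE : ¬ FiniteDimensional ℝ E)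
    (G : Submodule ℝ E) [FiniteDimensional ℝ G] (n : ℕ) :
    ∃ (v : Fin n → E) (φ : Fin n → StrongDual ℝ E),
      (∀ i j, φ i (v j) = if i = j then 1 else 0) ∧ (∀ i, ∀ g ∈ G, φ i g = 0) ∧
      (∀ i, ‖v i‖ ≤ 2) ∧ ∀ i, ‖φ i‖ ≤ 3 ^ n := by
  induction n with
  | zero => exact ⟨Fin.elim0, Fin.elim0, nofun, nofun, nofun, nofun⟩
  | succ n ih =>
    obtain ⟨v, φ, hφv, hφG, hv, hφ⟩ := ih
    have : FiniteDimensional ℝ (Submodule.span ℝ (Set.range v)) :=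
      FiniteDimensional.span_of_finite ℝ (Set.finite_range v)
    set A := G ⊔ Submodule.span ℝ (Set.range v)
    have hA_top : A ≠ ⊤ := fun h => hE <| by
      have : FiniteDimensional ℝ (⊤ : Submodule ℝ E) := h ▸ inferInstance
      exact Module.Finite.equiv (Submodule.topEquiv)
    obtain ⟨w, ψ, hψw, hψA, hw, hψ⟩ :=
      exists_dual_pair_of_ne_top A.closed_of_finiteDimensional hA_top
    have hψv : ∀ j, ψ (v j) = 0 := fun j =>
      hψA _ (Submodule.mem_sup_right (Submodule.subset_span (Set.mem_range_self j)))
    have hψG : ∀ g ∈ G, ψ g = 0 := fun g hg => hψA _ (Submodule.mem_sup_left hg)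
    refine ⟨Fin.snoc v w, Fin.snoc (fun i => φ i - φ i w • ψ) ψ, fun i j => ?_, fun i g hg => ?_,
      fun i => ?_, fun i => ?_⟩
    · induction i using Fin.lastCases <;> induction j using Fin.lastCases <;>
        simp [hψw, hψv, hφv, Fin.castSucc_ne_last, (Fin.castSucc_ne_last _).symm]
    · induction i using Fin.lastCases <;> simp [hψG g hg, hφG _ g hg]
    · induction i using Fin.lastCases <;> simp [hw, hv]
    · induction i using Fin.lastCases with
      | last => simpa using hψ.trans (one_le_pow₀ (by norm_num))
      | cast i =>
        have hφw : ‖φ i w‖ ≤ ‖φ i‖ * 2 := ((φ i).le_opNorm w).trans (by gcongr)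
        rw [Fin.snoc_castSucc]
        calc ‖φ i - φ i w • ψ‖ ≤ ‖φ i‖ + ‖φ i‖ * 2 * 1 := by
              refine (norm_sub_le _ _).trans ?_
              rw [norm_smul]
              gcongr
          _ ≤ 3 ^ (n + 1) := by rw [pow_succ]; linarith [hφ i]

theorem exists_uniform_retraction_of_not_finiteDimensional (hE : ¬ FiniteDimensional ℝ E)
    (Z : Type*) [NormedAddCommGroup Z] [NormedSpace ℝ Z] [FiniteDimensional ℝ Z] :
    ∃ C : ℝ, ∀ G : Submodule ℝ E, FiniteDimensional ℝ G →
      ∃ (j : Z →L[ℝ] E) (ρ : E →L[ℝ] Z), (∀ z, ρ (j z) = z) ∧ (∀ y ∈ G, ρ y = 0) ∧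
        ‖j‖ ≤ C ∧ ‖ρ‖ ≤ C := by
  set n := Module.finrank ℝ Z
  let b := Module.finBasis ℝ Z
  let coord : Fin n → StrongDual ℝ Z := fun i => LinearMap.toContinuousLinearMap (b.coord i)
  refine ⟨∑ i, (2 * ‖coord i‖ + 3 ^ n * ‖b i‖), fun G _ => ?_⟩
  obtain ⟨v, φ, hφv, hφG, hv, hφ⟩ := exists_biorthogonal_of_not_finiteDimensional hE G n
  refine ⟨∑ i, (coord i).smulRight (v i), ∑ i, (φ i).smulRight (b i), fun z => ?_,
    fun y hy => by simp [hφG _ y hy], ?_, ?_⟩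
  · simp [coord, hφv]
  · refine (norm_sum_le _ _).trans (Finset.sum_le_sum fun i _ => ?_)
    rw [ContinuousLinearMap.norm_smulRight_apply]
    have := mul_le_mul_of_nonneg_left (hv i) (norm_nonneg (coord i))
    linarith [show 0 ≤ (3 : ℝ) ^ n * ‖b i‖ by positivity]
  · refine (norm_sum_le _ _).trans (Finset.sum_le_sum fun i _ => ?_)
    rw [ContinuousLinearMap.norm_smulRight_apply]
    have := mul_le_mul_of_nonneg_right (hφ i) (norm_nonneg (b i))
    linarith [show 0 ≤ 2 * ‖coord i‖ by positivity]

theorem exists_uniform_factorization_of_finiteDimensional_complement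
    {X Z : Type*} [NormedAddCommGroup X] [NormedSpace ℝ X] [NormedAddCommGroup Z]
    [NormedSpace ℝ Z] [FiniteDimensional ℝ Z] (hE : ¬ FiniteDimensional ℝ E)
    (i : E →L[ℝ] X) (P : X →L[ℝ] E) (q : X →L[ℝ] Z) (ι : Z →L[ℝ] X)
    (hiPιq : ∀ x, i (P x) + ι (q x) = x) :
    ∃ c : ℝ, ∀ F : Submodule ℝ X, FiniteDimensional ℝ F →
      ∃ (A : X →L[ℝ] E) (T : E →L[ℝ] X), (∀ x ∈ F, T (A x) = x) ∧ ‖A‖ * ‖T‖ ≤ c := by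
  obtain ⟨C, hC⟩ := exists_uniform_retraction_of_not_finiteDimensional hE Z
  refine ⟨(‖P‖ + C * ‖q‖) * (‖i‖ + ‖i‖ * (C * C) + ‖ι‖ * C), fun F _ => ?_⟩
  obtain ⟨j, ρ, hρj, hρPF, hj, hρ⟩ := hC (F.map P.toLinearMap) inferInstance
  refine ⟨P + j ∘L q, i - i ∘L j ∘L ρ + ι ∘L ρ, fun x hx => ?_, ?_⟩
  · have hρA : ρ (P x + j (q x)) = q x := by
      rw [map_add, hρPF (P x) ⟨x, hx, rfl⟩, hρj, zero_add]
    calc i (P x + j (q x)) - i (j (ρ (P x + j (q x)))) + ι (ρ (P x + j (q x)))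
        = i (P x) + ι (q x) := by rw [hρA, map_add]; abel
      _ = x := hiPιq x
  · have hC0 : 0 ≤ C := (norm_nonneg j).trans hj
    have hA : ‖P + j ∘L q‖ ≤ ‖P‖ + C * ‖q‖ := calc
      _ ≤ ‖P‖ + ‖j‖ * ‖q‖ := (norm_add_le _ _).trans (by gcongr; exact j.opNorm_comp_le q)
      _ ≤ _ := by gcongr
    have hT : ‖i - i ∘L j ∘L ρ + ι ∘L ρ‖ ≤ ‖i‖ + ‖i‖ * (C * C) + ‖ι‖ * C := calc
      _ ≤ ‖i‖ + ‖i‖ * (‖j‖ * ‖ρ‖) + ‖ι‖ * ‖ρ‖ := by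
        refine (norm_add_le _ _).trans (add_le_add ((norm_sub_le _ _).trans ?_) ?_)
        · gcongr
          exact (i.opNorm_comp_le _).trans (by gcongr; exact j.opNorm_comp_le ρ)
        · exact ι.opNorm_comp_le ρ
      _ ≤ _ := by gcongr
    gcongr

end Factorization

theorem Degree.d_le_of_retraction (D : Degree)
    {E : Type} [NormedAddCommGroup E] [NormedSpace ℝ E] [CompleteSpace E]
    {E' : Type} [NormedAddCommGroup E'] [NormedSpace ℝ E'] [CompleteSpace E']
    {F : Submodule ℝ E} {G : Submodule ℝ E'} [FiniteDimensional ℝ F] [FiniteDimensional ℝ G]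
    (A : E' →L[ℝ] E) (T : E →L[ℝ] E') (hAG : G.map A.toLinearMap ≤ F)
    (hTA : ∀ g ∈ G, T (A g) = g) {c M : ℝ} (hc : ‖A‖ * ‖T‖ ≤ c) (hM : D.d E F ≤ M) :
    D.d E' G ≤ D.K (max 1 c) M := by
  let S : G →L[ℝ] F := (A ∘L G.subtypeL).codRestrict F fun g => hAG ⟨g, g.2, rfl⟩
  have hS : ‖S‖ ≤ ‖A‖ := ContinuousLinearMap.opNorm_le_bound _ (norm_nonneg A) fun g =>
    (A.le_opNorm g).trans_eq rfl
  refine (D.bound E E' F G inferInstance inferInstance S T fun g => hTA g g.2).trans ?_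
  have hd := D.nonneg E F
  split_ifs with hG
  · exact D.K_mono le_rfl (le_max_left _ _) hd hM
  · obtain ⟨g, hg, hg0⟩ := (Submodule.ne_bot_iff G).1 hG
    have hST : 1 ≤ ‖S‖ * ‖T‖ := by
      have hgpos : 0 < ‖g‖ := norm_pos_iff.2 hg0
      have : ‖g‖ ≤ ‖S‖ * ‖T‖ * ‖g‖ := calc
        ‖g‖ = ‖T (S ⟨g, hg⟩)‖ := (congrArg norm (hTA g hg)).symm
        _ ≤ ‖T‖ * (‖S‖ * ‖(⟨g, hg⟩ : G)‖) :=
          (T.le_opNorm _).trans (by gcongr; exact S.le_opNorm _)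
        _ = ‖S‖ * ‖T‖ * ‖g‖ := by rw [mul_left_comm, mul_assoc]; rfl
      nlinarith
    have hSTc : ‖S‖ * ‖T‖ ≤ c := (mul_le_mul_of_nonneg_right hS (norm_nonneg T)).trans hc
    exact D.K_mono hST (le_max_of_le_right hSTc) hd hM

theorem DSmall.of_finiteDimensional (D : Degree)
    (X : Type) [NormedAddCommGroup X] [NormedSpace ℝ X] [CompleteSpace X]
    [FiniteDimensional ℝ X] : DSmall D X :=
  ⟨_, fun _ _ =>
    D.d_le_of_retraction (F := ⊤) (.id ℝ X) (.id ℝ X) le_top (fun _ _ => rfl) le_rfl le_rfl⟩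

section ComplementedSubspace

variable (D : Degree) {X : Type} [NormedAddCommGroup X] [NormedSpace ℝ X] [CompleteSpace X]
  {Y : Submodule ℝ X} [CompleteSpace Y] {P : X →L[ℝ] Y}

theorem Degree.d_le_of_d_map_subtype_le (hP : ∀ y : Y, P y = y) {G : Submodule ℝ Y}
    [FiniteDimensional ℝ G] {M : ℝ} (hM : D.d X (G.map Y.subtype) ≤ M) :
    D.d Y G ≤ D.K (max 1 ‖P‖) M :=
  D.d_le_of_retraction Y.subtypeL P le_rfl (fun g _ => hP g)
    (mul_le_of_le_one_left (norm_nonneg P) Y.norm_subtypeL_le) hM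

theorem Degree.d_map_subtype_le_of_d_le (hP : ∀ y : Y, P y = y) {G : Submodule ℝ Y}
    [FiniteDimensional ℝ G] {M : ℝ} (hM : D.d Y G ≤ M) :
    D.d X (G.map Y.subtype) ≤ D.K (max 1 ‖P‖) M :=
  D.d_le_of_retraction P Y.subtypeL (by rintro _ ⟨_, ⟨g, hg, rfl⟩, rfl⟩; simpa [hP] using hg)
    (by rintro _ ⟨g, -, rfl⟩; simp [hP])
    (mul_le_of_le_one_right (norm_nonneg P) Y.norm_subtypeL_le) hM

theorem DSmall.submodule (hP : ∀ y : Y, P y = y) (hX_small : DSmall D X) : DSmall D Y := by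
  obtain ⟨M, hM⟩ := hX_small
  exact ⟨_, fun G _ => D.d_le_of_d_map_subtype_le hP (hM _ inferInstance)⟩

theorem DSmall.of_submodule (hY : IsClosed (Y : Set X)) [FiniteDimensional ℝ (X ⧸ Y)]
    (hP : ∀ y : Y, P y = y) (hY_small : DSmall D Y) : DSmall D X := by
  by_cases hX : FiniteDimensional ℝ X
  · exact DSmall.of_finiteDimensional D X
  have hY_inf : ¬ FiniteDimensional ℝ Y := fun _ => hX (Module.Finite.of_submodule_quotient Y)
  let ι : X ⧸ Y →L[ℝ] X := LinearMap.toContinuousLinearMap <|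
    Y.liftQ (LinearMap.id - Y.subtype ∘ₗ P.toLinearMap) fun y hy => by simp [hP ⟨y, hy⟩]
  obtain ⟨c, hc⟩ := exists_uniform_factorization_of_finiteDimensional_complement hY_inf
    Y.subtypeL P Y.mkQL ι fun x => by simp [ι]
  obtain ⟨M, hM⟩ := hY_small
  refine ⟨D.K (max 1 c) M, fun F _ => ?_⟩
  obtain ⟨A, T, hTA, hAT⟩ := hc F inferInstance
  exact D.d_le_of_retraction A T le_rfl hTA hAT (hM _ inferInstance)

theorem AsympDSmall.submodule (hP : ∀ y : Y, P y = y) (hX_small : AsympDSmall D X) :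
    AsympDSmall D Y := by
  obtain ⟨K, hK⟩ := hX_small
  refine ⟨D.K (max 1 ‖P‖) K, fun n => ?_⟩
  obtain ⟨Xn, hXn_closed, hXn_cofg, hXn⟩ := hK n
  refine ⟨Xn.comap Y.subtype, hXn_closed.preimage continuous_subtype_val,
    Submodule.CoFG.comap hXn_cofg Y.subtype, fun G hG _ hGn => ?_⟩
  refine D.d_le_of_d_map_subtype_le hP
    (hXn _ (Submodule.map_le_iff_le_comap.2 hG) inferInstance ?_)
  rwa [Submodule.finrank_map_subtype_eq]

theorem AsympDSmall.of_submodule (hY : IsClosed (Y : Set X)) [FiniteDimensional ℝ (X ⧸ Y)]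
    (hP : ∀ y : Y, P y = y) (hY_small : AsympDSmall D Y) : AsympDSmall D X := by
  obtain ⟨K, hK⟩ := hY_small
  refine ⟨D.K (max 1 ‖P‖) K, fun n => ?_⟩
  obtain ⟨Yn, hYn_closed, hYn_cofg, hYn⟩ := hK n
  refine ⟨Yn.map Y.subtype, hY.isClosedMap_subtype_val _ hYn_closed,
    Submodule.CoFG.map_subtype inferInstance hYn_cofg, fun F hF _ hFn => ?_⟩
  have hFY : F ≤ Y := hF.trans (Submodule.map_subtype_le Y Yn)
  obtain ⟨G, rfl⟩ : ∃ G : Submodule ℝ Y, G.map Y.subtype = F :=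
    ⟨F.comap Y.subtype, by rw [Submodule.map_comap_subtype, inf_eq_right.2 hFY]⟩
  have : FiniteDimensional ℝ G :=
    (Submodule.equivMapOfInjective _ Y.injective_subtype G).symm.finiteDimensional
  refine D.d_map_subtype_le_of_d_le hP (hYn G ?_ inferInstance ?_)
  · exact (Submodule.map_le_map_iff_of_injective Y.injective_subtype _ _).1 hF
  · rwa [Submodule.finrank_map_subtype_eq] at hFn

end ComplementedSubspace

/-- for a finite-codimensional closed subspace `Y` of a Banach space `X`,
`X` is `d`-small iff `Y` is `d`-small, and `X` is asymptotically `d`-small iff `Y` is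
asymptotically `d`-small. -/
theorem statement10 (D : Degree)
    (X : Type) [NormedAddCommGroup X] [NormedSpace ℝ X] [CompleteSpace X]
    (Y : Submodule ℝ X) (hY : IsClosed (Y : Set X))
    (hcodim : FiniteDimensional ℝ (X ⧸ Y)) :
    haveI : CompleteSpace ↥Y := hY.completeSpace_coe
    (DSmall D X ↔ DSmall D ↥Y) ∧ (AsympDSmall D X ↔ AsympDSmall D ↥Y) := by
  have : CompleteSpace ↥Y := hY.completeSpace_coe
  obtain ⟨P, hP⟩ := Submodule.ClosedComplemented.of_finiteDimensional_quotient hY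
  exact ⟨⟨DSmall.submodule D hP, DSmall.of_submodule D hY hP⟩,
    ⟨AsympDSmall.submodule D hP, AsympDSmall.of_submodule D hY hP⟩⟩
end

section
/- Let (F_n) be an FDD of a subspace of a Banach space X and suppose a Banach space Y is tight in (F_n). Then Y is tight in every block-FDD (G_m) of (F_n). -/
/-- `(F_n)` is an FDD (finite-dimensional decomposition) of a subspace of `X`: each `F_n`
is a nonzero finite-dimensional subspace, and every element of the closed span of the
`F_n`'s has a unique representation as a norm-convergent series `∑ x_n` with
`x_n ∈ F_n`. -/
def IsFDD (X : Type) [NormedAddCommGroup X] [NormedSpace ℝ X]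
    (F : ℕ → Submodule ℝ X) : Prop :=
  (∀ n, F n ≠ ⊥) ∧ (∀ n, FiniteDimensional ℝ (F n)) ∧
  ∀ z ∈ (⨆ n, F n).topologicalClosure,
    ∃! x : ℕ → X, (∀ n, x n ∈ F n) ∧
      Filter.Tendsto (fun N => ∑ n ∈ Finset.range N, x n) Filter.atTop (nhds z)

/-- `(G_m)` is a block-FDD of `(F_n)`: a sequence of nonzero finite-dimensional subspaces
with successive supports relative to `(F_n)`, i.e. `G_m ⊆ ⊕_{n ∈ A_m} F_n` for some
successive finite nonempty sets `A_0 < A_1 < ⋯`. -/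
def IsBlockFDD (X : Type) [NormedAddCommGroup X] [NormedSpace ℝ X]
    (F G : ℕ → Submodule ℝ X) : Prop :=
  (∀ m, G m ≠ ⊥) ∧ (∀ m, FiniteDimensional ℝ (G m)) ∧
  ∃ A : ℕ → Finset ℕ, (∀ m, (A m).Nonempty) ∧
    (∀ m, ∀ i ∈ A m, ∀ j ∈ A (m + 1), i < j) ∧
    ∀ m, G m ≤ ⨆ n ∈ (A m : Set ℕ), F n

/-- The Banach space `Y` isomorphically embeds into the closed subspace `W` of `X`. -/
def EmbedsIn (Y : Type) [NormedAddCommGroup Y] [NormedSpace ℝ Y]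
    {X : Type} [NormedAddCommGroup X] [NormedSpace ℝ X]
    (W : Submodule ℝ X) : Prop :=
  ∃ T : Y →L[ℝ] X, (∀ y, T y ∈ W) ∧ ∃ c > (0 : ℝ), ∀ y, c * ‖y‖ ≤ ‖T y‖

/-- The Banach space `Y` is tight in the sequence `(F_n)`: there is a sequence of nonempty
successive intervals `I_0 < I_1 < ⋯` of integers such that for every infinite `A ⊆ ℕ`,
`Y` does not embed into the closed span `[F_n : n ∉ ⋃_{i ∈ A} I_i]`. -/
def TightIn (Y : Type) [NormedAddCommGroup Y] [NormedSpace ℝ Y]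
    (X : Type) [NormedAddCommGroup X] [NormedSpace ℝ X]
    (F : ℕ → Submodule ℝ X) : Prop :=
  ∃ I : ℕ → Finset ℕ,
    (∀ i, (I i).Nonempty) ∧ (∀ i, ∃ a b, I i = Finset.Icc a b) ∧
    (∀ i, ∀ p ∈ I i, ∀ q ∈ I (i + 1), p < q) ∧
    ∀ A : Set ℕ, A.Infinite →
      ¬ EmbedsIn Y ((⨆ (n : ℕ) (_ : ∀ i ∈ A, n ∉ I i), F n).topologicalClosure)

/-- For a sequence of successive nonempty finite sets, elements of later sets are larger. -/
lemma succ_chain {I : ℕ → Finset ℕ} (hne : ∀ i, (I i).Nonempty)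
    (hlt : ∀ i, ∀ p ∈ I i, ∀ q ∈ I (i + 1), p < q) :
    ∀ {i j : ℕ}, i < j → ∀ p ∈ I i, ∀ q ∈ I j, p < q := by
  intro i j hij
  induction j with
  | zero => omega
  | succ j ih =>
    intro p hp q hq
    rcases Nat.lt_succ_iff_lt_or_eq.mp hij with h | h
    · obtain ⟨r, hr⟩ := hne j
      exact (ih h p hp r hr).trans (hlt j r hr q hq)
    · subst h; exact hlt i p hp q hq

/-- For a sequence of successive nonempty finite sets, elements of the `i`-th set are `≥ i`. -/
lemma self_le_mem {I : ℕ → Finset ℕ} (hne : ∀ i, (I i).Nonempty)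
    (hlt : ∀ i, ∀ p ∈ I i, ∀ q ∈ I (i + 1), p < q) :
    ∀ i, ∀ n ∈ I i, i ≤ n := by
  intro i
  induction i with
  | zero => intro n _; exact Nat.zero_le n
  | succ i ih =>
    intro n hn
    obtain ⟨p, hp⟩ := hne i
    have h1 := hlt i p hp n hn
    have h2 := ih p hp
    omega

/-- Auxiliary recursion producing, for each `k`, the pair `(d k, idx k)` used to build
the intervals `J k = [c k, d k]` witnessing tightness in the block-FDD. -/
def blockAux (A I : ℕ → Finset ℕ) : ℕ → ℕ × ℕ
  | 0 => ((I ((A 0).sup id + 1)).sup id, (A 0).sup id + 1)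
  | k + 1 =>
      let p := blockAux A I k
      let i := (A (p.1 + 1)).sup id + p.2 + 1
      ((I i).sup id, i)

/-- Left endpoints of the intervals. -/
def blockC (A I : ℕ → Finset ℕ) : ℕ → ℕ
  | 0 => 0
  | k + 1 => (blockAux A I k).1 + 1

/-- if a Banach space `Y` is tight in an FDD `(F_n)` of a subspace of `X`,
then `Y` is tight in every block-FDD `(G_m)` of `(F_n)`. -/
theorem statement13 (X : Type) [NormedAddCommGroup X] [NormedSpace ℝ X] [CompleteSpace X]
    (F G : ℕ → Submodule ℝ X) (hF : IsFDD X F) (hG : IsBlockFDD X F G)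
    (Y : Type) [NormedAddCommGroup Y] [NormedSpace ℝ Y] [CompleteSpace Y]
    (hT : TightIn Y X F) : TightIn Y X G := by
  obtain ⟨hGne, hGfd, A, hAne, hAlt, hGle⟩ := hG
  obtain ⟨I, hIne, hIicc, hIlt, hItight⟩ := hT
  set d : ℕ → ℕ := fun k => (blockAux A I k).1 with hd
  set idx : ℕ → ℕ := fun k => (blockAux A I k).2 with hidx
  set c : ℕ → ℕ := blockC A I with hc
  -- basic structural facts
  have hd_eq : ∀ k, d k = (I (idx k)).sup id := by
    intro k; cases k <;> rfl
  have hc0 : c 0 = 0 := rfl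
  have hcS : ∀ k, c (k + 1) = d k + 1 := fun k => rfl
  have hidxS : ∀ k, idx (k + 1) = (A (d k + 1)).sup id + idx k + 1 := fun k => rfl
  have hidx0 : idx 0 = (A 0).sup id + 1 := rfl
  -- (1) sup of A (c k) < idx k
  have h1 : ∀ k, (A (c k)).sup id < idx k := by
    intro k
    cases k with
    | zero => simp [hc0, hidx0]
    | succ k => rw [hcS, hidxS]; omega
  -- (2) idx k ≤ d k
  have h2 : ∀ k, idx k ≤ d k := by
    intro k
    obtain ⟨n, hn⟩ := hIne (idx k)
    have hle : idx k ≤ n := self_le_mem hIne hIlt _ n hn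
    have : n ≤ (I (idx k)).sup id := Finset.le_sup (f := id) hn
    rw [hd_eq]; omega
  -- elements of A m are ≥ m, elements of I i are ≥ i
  have hAself : ∀ m, ∀ n ∈ A m, m ≤ n := self_le_mem hAne hAlt
  have hIself : ∀ i, ∀ n ∈ I i, i ≤ n := self_le_mem hIne hIlt
  -- (3) c k ≤ d k
  have h3 : ∀ k, c k ≤ d k := by
    intro k
    cases k with
    | zero => exact Nat.zero_le _
    | succ k =>
      rw [hcS]
      have := h2 (k + 1)
      rw [hidxS] at this
      obtain ⟨n, hn⟩ := hAne (d k + 1)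
      have h4 := hAself (d k + 1) n hn
      have h5 : n ≤ (A (d k + 1)).sup id := Finset.le_sup (f := id) hn
      omega
  -- (4) idx is strictly monotone
  have h4 : StrictMono idx := by
    apply strictMono_nat_of_lt_succ
    intro k; rw [hidxS]; omega
  -- (5) key hit lemma
  have hhit : ∀ k m n, n ∈ A m → n ∈ I (idx k) → c k ≤ m ∧ m ≤ d k := by
    intro k m n hnA hnI
    constructor
    · -- lower bound
      by_contra h
      push_neg at h
      have hni : idx k ≤ n := hIself _ n hnI
      have hsup := h1 k
      -- n > sup of A (c k)
      have hbig : (A (c k)).sup id < n := lt_of_lt_of_le hsup hni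
      rcases Nat.lt_or_ge m (c k) with hm | hm
      · obtain ⟨q, hq⟩ := hAne (c k)
        have := succ_chain hAne hAlt hm n hnA q hq
        have : q ≤ (A (c k)).sup id := Finset.le_sup (f := id) hq
        omega
      · omega
    · -- upper bound
      have hmn : m ≤ n := hAself m n hnA
      have : n ≤ (I (idx k)).sup id := Finset.le_sup (f := id) hnI
      rw [hd_eq]; omega
  -- the new intervals
  refine ⟨fun k => Finset.Icc (c k) (d k), ?_, ?_, ?_, ?_⟩
  · intro k; exact Finset.nonempty_Icc.mpr (h3 k)
  · intro k; exact ⟨c k, d k, rfl⟩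
  · intro k p hp q hq
    rw [Finset.mem_Icc] at hp hq
    have := hcS k
    omega
  · intro B hB hEmb
    -- the infinite set of F-indices
    refine hItight (idx '' B) (hB.image (h4.injective.injOn)) ?_
    obtain ⟨T, hTmem, cT, hcT, hT⟩ := hEmb
    refine ⟨T, fun y => ?_, cT, hcT, hT⟩
    have hWle : (⨆ (m : ℕ) (_ : ∀ k ∈ B, m ∉ Finset.Icc (c k) (d k)), G m) ≤
        (⨆ (n : ℕ) (_ : ∀ i ∈ idx '' B, n ∉ I i), F n) := by
      refine iSup₂_le fun m hm => ?_
      refine (hGle m).trans ?_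
      refine iSup₂_le fun n hn => ?_
      have hn' : n ∈ A m := by simpa using hn
      refine le_iSup₂_of_le n ?_ le_rfl
      rintro i ⟨k, hkB, rfl⟩ hnI
      have := hhit k m n hn' hnI
      have := hm k hkB
      rw [Finset.mem_Icc] at this
      omega
    have hclo : (⨆ (m : ℕ) (_ : ∀ k ∈ B, m ∉ Finset.Icc (c k) (d k)),
        G m).topologicalClosure ≤
        (⨆ (n : ℕ) (_ : ∀ i ∈ idx '' B, n ∉ I i), F n).topologicalClosure :=
      Submodule.topologicalClosure_mono hWle
    exact hclo (hTmem y)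
end

section
/- Let d be a degree and (F_n) an FDD of a d-large Banach space X. Then there exists a blocking (G_n) of (F_n) which is a d-better FDD, i.e., d(X,G_n) → ∞. -/
/-!
Fix `m`. As `X` is `d`-large, it has finite-dimensional subspaces `E` of arbitrarily large
degree. A perturbation `1 + A` of the identity with `‖A‖ ≤ 1/2` moves `E` into a finite span
`F 0 ⊕ ⋯ ⊕ F (N-1)`; a finite-rank perturbation of the identity, built from the uniformly
bounded coordinate projections of the FDD, then trades the head `F 0 ⊕ ⋯ ⊕ F (m-1)` for unit
vectors in `F (N+1), F (N+2), …`, landing in a block `F m ⊕ ⋯ ⊕ F (n-1)`. Both maps have left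
inverses, with norms bounded independently of `E` and `N`, so the control function bounds
`d(X, E)` by `K(c, d(X, block))`. Hence blocks starting at any `m` have arbitrarily large
degree, and choosing them one after the other gives the blocking.
-/

open Filter Topology BoundedContinuousFunction

variable {X : Type} [NormedAddCommGroup X] [NormedSpace ℝ X]

instance Submodule.finite_biSup_finset {R V ι : Type*} [Ring R] [AddCommGroup V] [Module R V]
    (s : Finset ι) (S : ι → Submodule R V) [∀ i, Module.Finite R (S i)] :
    Module.Finite R ↥(⨆ i ∈ s, S i) := by
  rw [iSup_subtype']
  infer_instance

theorem Submodule.sum_basis_repr_smul_coe {H : Submodule ℝ X} {ι : Type*} [Fintype ι]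
    (b : Module.Basis ι ℝ H) (x : H) : ∑ i, b.repr x i • (b i : X) = x := by
  conv_rhs => rw [← b.sum_repr x]
  simp only [Submodule.coe_sum, Submodule.coe_smul]

theorem exists_mem_dual_eq_one {V : Submodule ℝ X} (hV : V ≠ ⊥) :
    ∃ u ∈ V, ∃ f : StrongDual ℝ X, ‖u‖ = 1 ∧ ‖f‖ = 1 ∧ f u = 1 := by
  obtain ⟨v, hv, hv0⟩ := V.exists_mem_ne_zero_of_ne_bot hV
  have hu : ‖‖v‖⁻¹ • v‖ = 1 := by simp [norm_smul, hv0]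
  obtain ⟨f, hf, hfu⟩ := exists_dual_vector ℝ (‖v‖⁻¹ • v) (by rw [← norm_ne_zero_iff, hu]; simp)
  exact ⟨_, V.smul_mem _ hv, f, hu, hf, by simpa [hu] using hfu⟩

theorem ContinuousLinearMap.exists_sum_smul_eq {H : Submodule ℝ X} [FiniteDimensional ℝ H]
    (π : X →L[ℝ] X) (hπ : ∀ x, π x ∈ H) :
    ∃ (h : ℕ) (β : Fin h → StrongDual ℝ X) (v : Fin h → X),
      (∀ i, v i ∈ H) ∧ ∀ x, ∑ i, β i x • v i = π x := by
  let b := Module.finBasis ℝ H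
  refine ⟨_, fun i => (b.coord i).toContinuousLinearMap.comp (π.codRestrict H hπ),
    fun i => b i, fun i => (b i).2, fun x => ?_⟩
  exact H.sum_basis_repr_smul_coe b ⟨π x, hπ x⟩

section FiniteRank

variable {ι : Type*} [Fintype ι]

theorem norm_sum_smulRight_le (f : ι → StrongDual ℝ X) (d : ι → X) :
    ‖∑ i, (f i).smulRight (d i)‖ ≤ ∑ i, ‖f i‖ * ‖d i‖ :=
  (norm_sum_le _ _).trans
    (Finset.sum_le_sum fun _ _ => (ContinuousLinearMap.norm_smulRight_apply _ _).le)

theorem norm_one_add_le (A : X →L[ℝ] X) : ‖1 + A‖ ≤ 1 + ‖A‖ :=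
  (norm_add_le _ _).trans (add_le_add_left ContinuousLinearMap.norm_id_le _)

theorem norm_one_sub_le (A : X →L[ℝ] X) : ‖1 - A‖ ≤ 1 + ‖A‖ :=
  (norm_sub_le _ _).trans (add_le_add_left ContinuousLinearMap.norm_id_le _)

theorem one_sub_sum_smulRight_apply_one_add_sum_smulRight_apply [DecidableEq ι]
    (f g : ι → StrongDual ℝ X) (d : ι → X) (hgd : ∀ i j, g i (d j) = if i = j then 1 else 0) {w : X}
    (hw : ∀ i, g i w = 0) :
    (1 - ∑ i, (g i).smulRight (d i)) ((1 + ∑ i, (f i).smulRight (d i)) w) = w := by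
  simp [hw, hgd]

theorem exists_leftInverse_one_add [CompleteSpace X] {A : X →L[ℝ] X} (hA : ‖A‖ ≤ 1 / 2) :
    ∃ V : X →L[ℝ] X, ‖V‖ ≤ 2 ∧ ∀ x, V ((1 + A) x) = x := by
  let U := Units.oneSub (-A) (by rw [norm_neg]; linarith)
  have hVU : ((U⁻¹ : (X →L[ℝ] X)ˣ) : X →L[ℝ] X) * (1 + A) = 1 := by
    simp [U, sub_neg_eq_add]
  refine ⟨↑U⁻¹, ?_, fun x => DFunLike.congr_fun hVU x⟩
  set V : X →L[ℝ] X := ↑U⁻¹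
  have : ‖V‖ ≤ 1 + ‖V‖ * (1 / 2) :=
    calc ‖V‖ = ‖1 - V * A‖ := by rw [← hVU]; congr 1; noncomm_ring
      _ ≤ 1 + ‖V * A‖ := norm_one_sub_le _
      _ ≤ 1 + ‖V‖ * (1 / 2) := by gcongr; exact (norm_mul_le _ _).trans (by gcongr)
  linarith

end FiniteRank

/-- `S` restricted to `E`, together with `T`, is a morphism `(X, B) → (X, E)` in the sense of
`Degree.bound`, of norm at most `c`. -/
def HasMorphismLE (c : ℝ) (B E : Submodule ℝ X) : Prop :=
  ∃ S T : X →L[ℝ] X, (∀ x ∈ E, S x ∈ B) ∧ (∀ x ∈ E, T (S x) = x) ∧ ‖S‖ * ‖T‖ ≤ c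

theorem HasMorphismLE.trans {a b : ℝ} {B P E : Submodule ℝ X} (hBP : HasMorphismLE a B P)
    (hPE : HasMorphismLE b P E) : HasMorphismLE (a * b) B E := by
  obtain ⟨S₁, T₁, hS₁, hTS₁, hc₁⟩ := hBP
  obtain ⟨S₂, T₂, hS₂, hTS₂, hc₂⟩ := hPE
  refine ⟨S₁.comp S₂, T₂.comp T₁, fun x hx => hS₁ _ (hS₂ x hx),
    fun x hx => by simp [hTS₁ _ (hS₂ x hx), hTS₂ x hx], ?_⟩
  calc ‖S₁.comp S₂‖ * ‖T₂.comp T₁‖ ≤ (‖S₁‖ * ‖S₂‖) * (‖T₂‖ * ‖T₁‖) := by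
        gcongr <;> exact ContinuousLinearMap.opNorm_comp_le _ _
    _ = (‖S₁‖ * ‖T₁‖) * (‖S₂‖ * ‖T₂‖) := by ring
    _ ≤ a * b := mul_le_mul hc₁ hc₂ (by positivity) ((by positivity : 0 ≤ ‖S₁‖ * ‖T₁‖).trans hc₁)

theorem HasMorphismLE.mono {c : ℝ} {B B' E : Submodule ℝ X} (hB : B ≤ B')
    (h : HasMorphismLE c B E) : HasMorphismLE c B' E :=
  let ⟨S, T, hSB, hTS, hST⟩ := h
  ⟨S, T, fun x hx => hB (hSB x hx), hTS, hST⟩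

theorem Degree.d_le_K_of_hasMorphismLE (D : Degree) [CompleteSpace X] {B E : Submodule ℝ X}
    [FiniteDimensional ℝ B] [FiniteDimensional ℝ E] {c : ℝ} (hc : 1 ≤ c)
    (h : HasMorphismLE c B E) : D.d X E ≤ D.K c (D.d X B) := by
  obtain ⟨S, T, hSB, hTS, hST⟩ := h
  let S' : E →L[ℝ] B := (S.comp E.subtypeL).codRestrict B fun x => hSB x x.2
  have hS' : ‖S'‖ ≤ ‖S‖ := S.opNorm_comp_le E.subtypeL |>.trans
    (mul_le_of_le_one_right (norm_nonneg S) (Submodule.norm_subtypeL_le E))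
  refine (D.bound X X B E ‹_› ‹_› S' T fun x => hTS x x.2).trans ?_
  split_ifs with hE
  · exact D.K_mono le_rfl hc (D.nonneg X B) le_rfl
  · have : Nontrivial E := Submodule.nontrivial_iff_ne_bot.mpr hE
    refine D.K_mono ?_ ((mul_le_mul_of_nonneg_right hS' (norm_nonneg T)).trans hST)
      (D.nonneg X B) le_rfl
    obtain ⟨x, hx⟩ := exists_ne (0 : E)
    have hx' : 0 < ‖x‖ := norm_pos_iff.mpr hx
    have : ‖x‖ ≤ ‖S'‖ * ‖T‖ * ‖x‖ :=
      calc ‖x‖ = ‖T (S' x : X)‖ := congrArg norm (hTS x x.2).symm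
        _ ≤ ‖T‖ * (‖S'‖ * ‖x‖) := T.le_opNorm_of_le (S'.le_opNorm x)
        _ = ‖S'‖ * ‖T‖ * ‖x‖ := by ring
    nlinarith

theorem HasMorphismLE.exists_finset_of_iSup {ι : Type*} {c : ℝ} {F : ι → Submodule ℝ X}
    {E : Submodule ℝ X} [FiniteDimensional ℝ E] (h : HasMorphismLE c (⨆ i, F i) E) :
    ∃ s : Finset ι, HasMorphismLE c (⨆ i ∈ s, F i) E := by
  obtain ⟨S, T, hSB, hTS, hST⟩ := h
  have hcompact : IsCompactElement (E.map (S : X →ₗ[ℝ] X)) :=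
    (Submodule.fg_iff_compact _).mp ((Module.Finite.iff_fg.mp ‹_›).map _)
  obtain ⟨s, hs⟩ := CompleteLattice.IsCompactElement.exists_finset_of_le_iSup _ hcompact F
    (Submodule.map_le_iff_le_comap.mpr hSB)
  exact ⟨s, S, T, fun x hx => hs (Submodule.mem_map_of_mem hx), hTS, hST⟩

theorem hasMorphismLE_of_le_topologicalClosure [CompleteSpace X] {P E : Submodule ℝ X}
    [FiniteDimensional ℝ E] (hE : E ≤ P.topologicalClosure) : HasMorphismLE 3 P E := by
  let e := Module.finBasis ℝ E
  choose φ hφ using fun i =>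
    (exists_extension_norm_eq E (e.coord i).toContinuousLinearMap).imp fun _ h => h.1
  set δ : ℝ := 1 / (2 * (∑ i, ‖φ i‖ + 1))
  have hδ : 0 < δ := by positivity
  have happrox : ∀ i, ∃ y ∈ P, ‖y - e i‖ < δ := fun i => by
    obtain ⟨y, hyP, hy⟩ := Metric.mem_closure_iff.mp (hE (e i).2) δ hδ
    exact ⟨y, hyP, by rwa [dist_comm, dist_eq_norm] at hy⟩
  choose y hyP hy using happrox
  -- `1 + A` sends each basis vector `e i` of `E` to its approximation `y i ∈ P`.
  set A : X →L[ℝ] X := ∑ i, (φ i).smulRight (y i - e i)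
  have hA : ‖A‖ ≤ 1 / 2 :=
    calc ‖A‖ ≤ ∑ i, ‖φ i‖ * ‖y i - e i‖ := norm_sum_smulRight_le _ _
      _ ≤ ∑ i, ‖φ i‖ * δ := by gcongr with i; exact (hy i).le
      _ = (∑ i, ‖φ i‖) / (2 * (∑ i, ‖φ i‖ + 1)) := by rw [← Finset.sum_mul]; ring
      _ ≤ 1 / 2 := by rw [div_le_iff₀ (by positivity)]; linarith
  obtain ⟨V, hV, hVU⟩ := exists_leftInverse_one_add hA
  refine ⟨1 + A, V, fun x hx => ?_, fun x _ => hVU x, ?_⟩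
  · have hφx : ∀ i, φ i x = e.repr ⟨x, hx⟩ i := fun i => hφ i ⟨x, hx⟩
    have hrepr : ∑ i, φ i x • (e i : X) = x := by
      simpa only [hφx] using E.sum_basis_repr_smul_coe e ⟨x, hx⟩
    have : (1 + A) x = ∑ i, φ i x • y i := by
      simp [A, smul_sub, Finset.sum_sub_distrib, hrepr]
    rw [this]
    exact Submodule.sum_mem _ fun i _ => P.smul_mem _ (hyP i)
  · calc ‖1 + A‖ * ‖V‖ ≤ (1 + 1 / 2) * 2 :=
          mul_le_mul ((norm_one_add_le A).trans (by linarith)) hV (norm_nonneg _) (by norm_num)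
      _ = 3 := by norm_num

theorem hasMorphismLE_of_biorthogonal {ι : Type*} [Fintype ι] [DecidableEq ι]
    {B P : Submodule ℝ X} (β u' : ι → StrongDual ℝ X) (d : ι → X)
    (hu'd : ∀ i j, u' i (d j) = if i = j then 1 else 0) (hu'P : ∀ i, ∀ x ∈ P, u' i x = 0)
    (hPB : ∀ x ∈ P, x + ∑ i, β i x • d i ∈ B) {a b : ℝ} (ha : ∑ i, ‖β i‖ * ‖d i‖ ≤ a)
    (hb : ∑ i, ‖u' i‖ * ‖d i‖ ≤ b) : HasMorphismLE ((1 + a) * (1 + b)) B P := by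
  have ha₀ : 0 ≤ a := (Finset.sum_nonneg fun i _ => by positivity).trans ha
  refine ⟨1 + ∑ i, (β i).smulRight (d i), 1 - ∑ i, (u' i).smulRight (d i),
    fun x hx => by simpa using hPB x hx, fun x hx =>
      one_sub_sum_smulRight_apply_one_add_sum_smulRight_apply _ _ _ hu'd fun i => hu'P i x hx,
    mul_le_mul ?_ ?_ (norm_nonneg _) (by linarith)⟩
  · exact (norm_one_add_le _).trans (add_le_add_right ((norm_sum_smulRight_le _ _).trans ha) 1)
  · exact (norm_one_sub_le _).trans (add_le_add_right ((norm_sum_smulRight_le _ _).trans hb) 1)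

/-- `g` is the sequence of partial sums of an expansion `z = ∑ xₙ` with `xₙ ∈ F n`. -/
def IsPartialSums (F : ℕ → Submodule ℝ X) (g : ℕ → X) (z : X) : Prop :=
  g 0 = 0 ∧ (∀ n, g (n + 1) - g n ∈ F n) ∧ Tendsto g atTop (𝓝 z)

namespace IsPartialSums

variable {F : ℕ → Submodule ℝ X} {g g' : ℕ → X} {z z' : X}

theorem add (hg : IsPartialSums F g z) (hg' : IsPartialSums F g' z') :
    IsPartialSums F (g + g') (z + z') :=
  ⟨by simp [hg.1, hg'.1], fun n => by simpa [add_sub_add_comm] using add_mem (hg.2.1 n) (hg'.2.1 n),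
    hg.2.2.add hg'.2.2⟩

theorem const_smul (a : ℝ) (hg : IsPartialSums F g z) : IsPartialSums F (a • g) (a • z) :=
  ⟨by simp [hg.1], fun n => by simpa [← smul_sub] using (F n).smul_mem a (hg.2.1 n),
    hg.2.2.const_smul a⟩

theorem of_mem {j : ℕ} (hz : z ∈ F j) : IsPartialSums F (fun N => if j < N then z else 0) z := by
  refine ⟨by simp, fun n => ?_, tendsto_atTop_of_eventually_const (i₀ := j + 1) fun N hN => ?_⟩
  · rcases lt_trichotomy n j with h | rfl | h
    · simp [h.not_gt, (Nat.succ_le_of_lt h).not_gt]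
    · simpa using hz
    · simp [h, h.trans (Nat.lt_succ_self n)]
  · simp [Nat.lt_of_succ_le hN]

theorem sum_range_sub (hg : IsPartialSums F g z) (N : ℕ) :
    ∑ n ∈ Finset.range N, (g (n + 1) - g n) = g N := by
  rw [Finset.sum_range_sub, hg.1, sub_zero]

theorem of_tendsto (hF : ∀ n, IsClosed (F n : Set X)) {ι : Type*} {l : Filter ι} [l.NeBot]
    {G : ι → ℕ →ᵇ X} {Z : ι → X} {g : ℕ →ᵇ X} (hG : ∀ i, IsPartialSums F (G i) (Z i))
    (hGg : Tendsto G l (𝓝 g)) (hZz : Tendsto Z l (𝓝 z)) : IsPartialSums F g z := by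
  have hpt : ∀ n, Tendsto (fun i => G i n) l (𝓝 (g n)) :=
    fun n => ((continuous_eval_const n).tendsto g).comp hGg
  refine ⟨tendsto_nhds_unique (hpt 0) (by simp [(hG _).1]), fun n => ?_, ?_⟩
  · exact (hF n).mem_of_tendsto ((hpt (n + 1)).sub (hpt n)) (.of_forall fun i => (hG i).2.1 n)
  · exact (tendsto_iff_tendstoUniformly.mp hGg).tendsto_of_eventually_tendsto
      (.of_forall fun i => (hG i).2.2) hZz

end IsPartialSums

namespace IsFDD

variable {F : ℕ → Submodule ℝ X}

theorem exists_isPartialSums (hF : IsFDD X F) {z : X} (hz : z ∈ (⨆ n, F n).topologicalClosure) :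
    ∃ g, IsPartialSums F g z := by
  obtain ⟨x, ⟨hxF, hx⟩, -⟩ := hF.2.2 z hz
  refine ⟨fun N => ∑ n ∈ Finset.range N, x n, by simp, fun n => ?_, hx⟩
  simpa [Finset.sum_range_succ] using hxF n

theorem isPartialSums_unique (hF : IsFDD X F) {z : X} (hz : z ∈ (⨆ n, F n).topologicalClosure)
    {g g' : ℕ → X} (hg : IsPartialSums F g z) (hg' : IsPartialSums F g' z) : g = g' := by
  have hdiff : (fun n => g (n + 1) - g n) = fun n => g' (n + 1) - g' n :=
    (hF.2.2 z hz).unique ⟨hg.2.1, by simpa [hg.sum_range_sub] using hg.2.2⟩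
      ⟨hg'.2.1, by simpa [hg'.sum_range_sub] using hg'.2.2⟩
  funext N
  rw [← hg.sum_range_sub, ← hg'.sum_range_sub, hdiff]

theorem exists_partialSumsCLM [CompleteSpace X] (hF : IsFDD X F)
    (hspan : (⨆ n, F n).topologicalClosure = ⊤) :
    ∃ Q : X →L[ℝ] (ℕ →ᵇ X), ∀ z, IsPartialSums F (Q z) z := by
  have := hF.2.1
  have hz : ∀ z : X, z ∈ (⨆ n, F n).topologicalClosure := fun z => hspan ▸ Submodule.mem_top
  choose g hg using fun z => hF.exists_isPartialSums (hz z)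
  choose C hC using fun z => (cauchySeq_bdd (hg z).2.2.cauchySeq).imp fun R hR m n => (hR.2 m n).le
  let Q : X →ₗ[ℝ] (ℕ →ᵇ X) :=
    { toFun z := mkOfDiscrete (g z) (C z) (hC z)
      map_add' z w := by
        ext1 n; exact congrFun (hF.isPartialSums_unique (hz _) (hg _) ((hg z).add (hg w))) n
      map_smul' a z := by
        ext1 n; exact congrFun (hF.isPartialSums_unique (hz _) (hg _) ((hg z).const_smul a)) n }
  refine ⟨⟨Q, Q.continuous_of_isClosed_graph ?_⟩, hg⟩
  refine isSeqClosed_iff_isClosed.mp fun u p hu hup => ?_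
  simp only [SetLike.mem_coe, LinearMap.mem_graph_iff] at hu ⊢
  have hp : IsPartialSums F p.2 p.1 :=
    .of_tendsto (G := fun k => (u k).2) (Z := fun k => (u k).1)
      (fun n => (F n).closed_of_finiteDimensional) (fun k => by rw [hu k]; exact hg _)
      ((continuous_snd.tendsto _).comp hup) ((continuous_fst.tendsto _).comp hup)
  ext1 n
  exact congrFun (hF.isPartialSums_unique (hz _) hp (hg _)) n

theorem exists_coordinateProjections [CompleteSpace X] (hF : IsFDD X F)
    (hspan : (⨆ n, F n).topologicalClosure = ⊤) :
    ∃ (R : ℕ → X →L[ℝ] X) (C : ℝ), (∀ n, ‖R n‖ ≤ C) ∧ (∀ n x, R n x ∈ F n) ∧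
      ∀ n j, ∀ x ∈ F j, R n x = if n = j then x else 0 := by
  obtain ⟨Q, hQ⟩ := hF.exists_partialSumsCLM hspan
  refine ⟨fun n =>
    (evalCLM ℝ (n + 1) - evalCLM ℝ n : (ℕ →ᵇ X) →L[ℝ] X).comp Q, 2 * ‖Q‖, fun n => ?_,
    fun n x => by simpa using (hQ x).2.1 n, fun n j x hx => ?_⟩
  · refine ContinuousLinearMap.opNorm_le_bound _ (by positivity) fun x => ?_
    calc ‖Q x (n + 1) - Q x n‖ ≤ ‖Q x‖ + ‖Q x‖ :=
          (norm_sub_le _ _).trans (add_le_add (norm_coe_le_norm _ _) (norm_coe_le_norm _ _))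
      _ ≤ 2 * ‖Q‖ * ‖x‖ := by linarith [Q.le_opNorm x]
  · have hQx : ⇑(Q x) = fun N => if j < N then x else 0 :=
      hF.isPartialSums_unique (hspan ▸ Submodule.mem_top) (hQ x) (.of_mem hx)
    change Q x (n + 1) - Q x n = _
    simp only [hQx]
    split_ifs <;> first | (exfalso; omega) | simp

end IsFDD

section CoordinateProjections

variable {F : ℕ → Submodule ℝ X} {R : ℕ → X →L[ℝ] X}

theorem apply_eq_zero_of_mem_biSup (hR : ∀ n j, ∀ x ∈ F j, R n x = if n = j then x else 0)
    {n : ℕ} {s : Finset ℕ} (hn : n ∉ s) {x : X} (hx : x ∈ ⨆ j ∈ s, F j) : R n x = 0 := by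
  refine (iSup₂_le fun j hj y hy => ?_ : (⨆ j ∈ s, F j) ≤ (R n : X →ₗ[ℝ] X).ker) hx
  simp [hR n j y hy, (ne_of_mem_of_not_mem hj hn).symm]

theorem sum_range_apply_mem_biSup (hRF : ∀ n x, R n x ∈ F n) (m : ℕ) (x : X) :
    ∑ j ∈ Finset.range m, R j x ∈ ⨆ j ∈ Finset.range m, F j :=
  Submodule.sum_mem _ fun j hj =>
    (le_iSup₂ (f := fun j (_ : j ∈ Finset.range m) => F j) j hj) (hRF j x)

theorem sub_sum_range_apply_mem_biSup (hR : ∀ n j, ∀ x ∈ F j, R n x = if n = j then x else 0)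
    {m N n : ℕ} (hNn : N ≤ n) {x : X} (hx : x ∈ ⨆ j ∈ Finset.range N, F j) :
    x - ∑ j ∈ Finset.range m, R j x ∈ ⨆ j ∈ Finset.Ico m n, F j := by
  classical
  let π : X →L[ℝ] X := ∑ j ∈ Finset.range m, R j
  suffices hle : (⨆ j ∈ Finset.range N, F j) ≤
      (⨆ j ∈ Finset.Ico m n, F j).comap ((1 - π : X →L[ℝ] X) : X →ₗ[ℝ] X) by
    simpa [π] using hle hx
  refine iSup₂_le fun j hj y hy => ?_
  have hπy : π y = if j < m then y else 0 := by simp [π, hR _ j y hy, Finset.sum_ite_eq']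
  rw [Finset.mem_range] at hj
  by_cases hjm : j < m
  · simp [hπy, hjm]
  · simpa [hπy, hjm] using (le_iSup₂ (f := fun j (_ : j ∈ Finset.Ico m n) => F j) j
      (by simp; omega)) hy

end CoordinateProjections

/-- Write `π = R 0 + ⋯ + R (m-1)` as `∑ βᵢ ⊗ vᵢ`. Then `S = 1 + ∑ βᵢ ⊗ (uᵢ - vᵢ)` replaces the
head component `π x` of `x` by `∑ βᵢ(x) uᵢ`, with unit vectors `uᵢ ∈ F (N+1+i)`, and
`T = 1 - ∑ u'ᵢ ⊗ (uᵢ - vᵢ)` undoes this; `c` does not depend on `N` because `‖u'ᵢ‖ ≤ C`. -/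
theorem exists_hasMorphismLE_block {F : ℕ → Submodule ℝ X} (hF : ∀ n, F n ≠ ⊥)
    [∀ n, FiniteDimensional ℝ (F n)] {R : ℕ → X →L[ℝ] X} {C : ℝ} (hRC : ∀ n, ‖R n‖ ≤ C)
    (hRF : ∀ n x, R n x ∈ F n) (hR : ∀ n j, ∀ x ∈ F j, R n x = if n = j then x else 0)
    (m : ℕ) : ∃ c, 1 ≤ c ∧ ∀ N, m ≤ N → ∃ n, m < n ∧
      HasMorphismLE c (⨆ i ∈ Finset.Ico m n, F i) (⨆ i ∈ Finset.range N, F i) := by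
  let π : X →L[ℝ] X := ∑ j ∈ Finset.range m, R j
  have hπx : ∀ x, π x = ∑ j ∈ Finset.range m, R j x := fun x => by simp [π]
  obtain ⟨h, β, v, hvH, hβv⟩ := π.exists_sum_smul_eq fun x => by
    rw [hπx]; exact sum_range_apply_mem_biSup hRF m x
  have hC : 0 ≤ C := (norm_nonneg _).trans (hRC 0)
  refine ⟨(1 + ∑ i, ‖β i‖ * (1 + ‖v i‖)) * (1 + ∑ i, C * (1 + ‖v i‖)),
    one_le_mul_of_one_le_of_one_le (by simp; positivity) (by simp; positivity),
    fun N hN => ⟨N + 1 + h, by omega, ?_⟩⟩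
  choose u huF f hu hf hfu using fun i : Fin h => exists_mem_dual_eq_one (hF (N + 1 + i))
  let u' : Fin h → StrongDual ℝ X := fun i => (f i).comp (R (N + 1 + i))
  have hu'P : ∀ i, ∀ x ∈ ⨆ j ∈ Finset.range N, F j, u' i x = 0 := fun i x hx => by
    simp [u', apply_eq_zero_of_mem_biSup hR (n := N + 1 + i) (by simp; omega) hx]
  have hu'd : ∀ i j, u' i (u j - v j) = if i = j then 1 else 0 := fun i j => by
    have hv : R (N + 1 + i) (v j) = 0 :=
      apply_eq_zero_of_mem_biSup hR (n := N + 1 + i) (by simp; omega) (hvH j)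
    by_cases hij : i = j
    · subst hij; simp [u', hv, hR _ _ _ (huF i), hfu]
    · simp [u', hv, hR _ _ _ (huF j), hij, Fin.val_eq_val]
  have hd : ∀ i, ‖u i - v i‖ ≤ 1 + ‖v i‖ := fun i => (norm_sub_le _ _).trans (by rw [hu i])
  have hu'C : ∀ i, ‖u' i‖ ≤ C := fun i =>
    (ContinuousLinearMap.opNorm_comp_le _ _).trans (by rw [hf i, one_mul]; exact hRC _)
  refine hasMorphismLE_of_biorthogonal β u' (fun i => u i - v i) hu'd hu'P (fun x hx => ?_)
    (Finset.sum_le_sum fun i _ => mul_le_mul_of_nonneg_left (hd i) (norm_nonneg _))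
    (Finset.sum_le_sum fun i _ => mul_le_mul (hu'C i) (hd i) (norm_nonneg _) hC)
  have hSx : x + ∑ i, β i x • (u i - v i) = (x - π x) + ∑ i, β i x • u i := by
    simp [smul_sub, Finset.sum_sub_distrib, hβv]
    abel
  rw [hSx]
  refine add_mem (by rw [hπx]; exact sub_sum_range_apply_mem_biSup hR (by omega) hx)
    (Submodule.sum_mem _ fun i _ => Submodule.smul_mem _ _ ?_)
  exact (le_iSup₂ (f := fun j (_ : j ∈ Finset.Ico m (N + 1 + h)) => F j) (N + 1 + i)
    (by simp; omega)) (huF i)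

theorem exists_block_degree_gt [CompleteSpace X] (D : Degree) {F : ℕ → Submodule ℝ X}
    (hF : IsFDD X F) (hspan : (⨆ n, F n).topologicalClosure = ⊤) (hX : DLarge D X)
    (m : ℕ) (M : ℝ) : ∃ n, m < n ∧ M < D.d X (⨆ i ∈ Finset.Ico m n, F i) := by
  have := hF.2.1
  obtain ⟨R, C, hRC, hRF, hR⟩ := hF.exists_coordinateProjections hspan
  obtain ⟨c, hc, hblock⟩ := exists_hasMorphismLE_block hF.1 hRC hRF hR m
  obtain ⟨E, hE, hEd⟩ : ∃ E : Submodule ℝ X, FiniteDimensional ℝ E ∧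
      D.K (c * 3) (max M 0) < D.d X E := by
    by_contra! h
    exact hX ⟨_, h⟩
  obtain ⟨s, hs⟩ := (hasMorphismLE_of_le_topologicalClosure (E := E)
    (hspan ▸ le_top)).exists_finset_of_iSup
  have hsN : (⨆ i ∈ s, F i) ≤ ⨆ i ∈ Finset.range (m + s.sup id + 1), F i :=
    biSup_mono fun i hi => Finset.mem_range.mpr <| by
      have := Finset.le_sup (f := id) hi
      simp only [id] at this
      omega
  obtain ⟨n, hmn, hB⟩ := hblock (m + s.sup id + 1) (by omega)
  refine ⟨n, hmn, lt_of_not_ge fun hBM => hEd.not_ge ?_⟩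
  calc D.d X E ≤ D.K (c * 3) (D.d X (⨆ i ∈ Finset.Ico m n, F i)) :=
        D.d_le_K_of_hasMorphismLE (by linarith) (hB.trans (hs.mono hsN))
    _ ≤ D.K (c * 3) (max M 0) :=
        D.K_mono (by linarith) le_rfl (D.nonneg _ _) (hBM.trans (le_max_left _ _))

theorem exists_strictMono_tendsto_of_forall_exists_lt (f : ℕ → ℕ → ℝ)
    (h : ∀ m (M : ℝ), ∃ n, m < n ∧ M < f m n) :
    ∃ k : ℕ → ℕ, k 0 = 0 ∧ StrictMono k ∧ Tendsto (fun n => f (k n) (k (n + 1))) atTop atTop := by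
  choose g hg using h
  let k : ℕ → ℕ := fun n => Nat.rec 0 (fun p kp => g kp p) n
  exact ⟨k, rfl, strictMono_nat_of_lt_succ fun p => (hg (k p) p).1,
    tendsto_atTop_mono (fun p => (hg (k p) p).2.le) tendsto_natCast_atTop_atTop⟩

/-- every FDD `(F_n)` of a `d`-large Banach space `X` admits a blocking
`(G_n)`, given by a partition of `ℕ` into successive nonempty intervals
`[k n, k (n+1))`, which is a `d`-better FDD: `d(X, G_n) → ∞`. -/
theorem statement15 (D : Degree)
    (X : Type) [NormedAddCommGroup X] [NormedSpace ℝ X] [CompleteSpace X]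
    (F : ℕ → Submodule ℝ X) (hF : IsFDD X F)
    (hspan : (⨆ n, F n).topologicalClosure = ⊤)
    (hX : DLarge D X) :
    ∃ k : ℕ → ℕ, k 0 = 0 ∧ StrictMono k ∧
      Filter.Tendsto
        (fun n => D.d X (⨆ i ∈ Finset.Ico (k n) (k (n + 1)), F i))
        Filter.atTop Filter.atTop :=
  exists_strictMono_tendsto_of_forall_exists_lt _ (exists_block_degree_gt D hF hspan hX)
end

section
/- A bounded operator T : X → Y between Banach spaces is infinitely singular (no finite-codimensional subspace X₀ ⊆ X exists on which T restricts to an isomorphism onto its image) if and only if for every ε > 0 there exists an infinite-dimensional closed subspace X_ε ⊆ X with ‖T restricted to X_ε‖ ≤ ε. -/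
/-!
If `T` is bounded below on no closed finite-codimensional subspace, Mazur's construction gives
nonzero vectors `x n` with `‖T (x n)‖ ≤ ε 2⁻ⁿ⁻³ ‖x n‖`, each chosen in the common kernel of
finitely many norm-one functionals that norm `span {x 0, …, x (n-1)}` up to a factor `2`.
Then the projections onto initial segments of `(x n)` have norm `≤ 2`, so the coefficients of
`u ∈ span (range x)` are at most `4 ‖u‖`, whence `‖T u‖ ≤ ε ‖u‖` on the closed span, which is
infinite-dimensional. Conversely, an infinite-dimensional subspace meets every
finite-codimensional one nontrivially, and a nonzero `z` in the intersection cannot satisfy both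
`c ‖z‖ ≤ ‖T z‖` and `‖T z‖ ≤ c/2 ‖z‖`.
-/

open Submodule Set

section

variable {X : Type*} [NormedAddCommGroup X] [NormedSpace ℝ X]

theorem exists_finset_strongDual_norm_le_two_mul_norm_add (E : Submodule ℝ X)
    [FiniteDimensional ℝ E] :
    ∃ F : Finset (StrongDual ℝ X), ∀ u ∈ E, ∀ v : X, (∀ f ∈ F, f v = 0) →
      ‖u‖ ≤ 2 * ‖u + v‖ := by
  classical
  -- norming functionals of the points of a `1/2`-net of the unit sphere of `E`
  obtain ⟨t, hts, ht, hcover⟩ :=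
    finite_cover_balls_of_compact (isCompact_sphere (0 : E) 1) (one_half_pos (α := ℝ))
  choose g hg_norm hg_apply using fun w : X => exists_dual_vector'' ℝ w
  refine ⟨ht.toFinset.image fun w : E => g w, fun u hu v hv => ?_⟩
  rcases eq_or_ne u 0 with rfl | hu0
  · simp
  set w : E := ‖u‖⁻¹ • ⟨u, hu⟩
  have hw : w ∈ Metric.sphere (0 : E) 1 := by simp [w, norm_smul, hu0]
  obtain ⟨w₀, hw₀t, hww₀⟩ := mem_iUnion₂.1 (hcover hw)
  have hgw : 1 / 2 ≤ g w₀ w := by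
    have hw₀ : ‖(w₀ : X)‖ = 1 := by simpa using hts hw₀t
    have hdist : |g w₀ (w - w₀)| < 1 / 2 :=
      ((g w₀).le_opNorm _).trans_lt <| (mul_le_of_le_one_left (norm_nonneg _)
        (hg_norm _)).trans_lt (by simpa [dist_eq_norm] using hww₀)
    have : g w₀ w = 1 + g w₀ (w - w₀) := by simp [hg_apply, hw₀]
    linarith [neg_abs_le (g w₀ (w - w₀))]
  have hgu : g w₀ (u + v) = ‖u‖ * g w₀ w := by
    rw [map_add, hv _ (Finset.mem_image_of_mem _ (ht.mem_toFinset.2 hw₀t)), add_zero]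
    simp [w, norm_ne_zero_iff.2 hu0]
  calc ‖u‖ ≤ 2 * (‖u‖ * g w₀ w) := by nlinarith [norm_nonneg u]
    _ = 2 * g w₀ (u + v) := by rw [hgu]
    _ ≤ 2 * ‖u + v‖ := by
        gcongr
        exact (le_abs_self _).trans (((g w₀).le_opNorm _).trans
          (mul_le_of_le_one_left (norm_nonneg _) (hg_norm _)))

def HasBasisConstantLE (K : ℝ) (x : ℕ → X) : Prop :=
  ∀ n, ∀ u ∈ span ℝ (x '' Iic n), ∀ v ∈ span ℝ (x '' Ioi n), ‖u‖ ≤ K * ‖u + v‖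

theorem exists_seq_hasBasisConstantLE_two (Q : ℕ → X → Prop)
    (hQ : ∀ n (G : Finset (StrongDual ℝ X)), ∃ x, Q n x ∧ ∀ f ∈ G, f x = 0) :
    ∃ x : ℕ → X, (∀ n, Q n (x n)) ∧ HasBasisConstantLE 2 x := by
  classical
  choose y hyQ hyG using hQ
  choose N hN using fun S : Finset X =>
    exists_finset_strongDual_norm_le_two_mul_norm_add (span ℝ (S : Set X))
  -- `σ n` holds `x 0, …, x (n-1)` and the functionals that must vanish at `x n, x (n+1), …`
  let σ : ℕ → Finset X × Finset (StrongDual ℝ X) := fun n =>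
    Nat.rec (∅, ∅) (fun n p => (insert (y n p.2) p.1, p.2 ∪ N (insert (y n p.2) p.1))) n
  set x : ℕ → X := fun n => y n (σ n).2
  have hσ₁ : ∀ n, (σ n).1 = (Finset.range n).image x := by
    intro n
    induction n with
    | zero => rfl
    | succ n ih => rw [Finset.range_add_one, Finset.image_insert, ← ih]
  have hσ₂ : ∀ n, N ((Finset.range (n + 1)).image x) ⊆ (σ (n + 1)).2 := fun n =>
    hσ₁ (n + 1) ▸ Finset.subset_union_right
  have hmono : Monotone fun n => (σ n).2 :=
    monotone_nat_of_le_succ fun n => Finset.subset_union_left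
  refine ⟨x, fun n => hyQ _ _, fun n u hu v hv =>
    hN ((Finset.range (n + 1)).image x) u ?_ v fun f hf => ?_⟩
  · simpa [Finset.coe_image, Set.Iio_add_one_eq_Iic] using hu
  · have hker : x '' Ioi n ⊆ LinearMap.ker (f : X →ₗ[ℝ] ℝ) := by
      rintro _ ⟨m, hm, rfl⟩
      exact hyG _ _ f (hmono (Nat.succ_le_of_lt hm) (hσ₂ n hf))
    exact span_le.2 hker hv

theorem HasBasisConstantLE.norm_smul_le {K : ℝ} {x : ℕ → X} (hx : HasBasisConstantLE K x)
    (hK : 0 ≤ K) {s : Finset ℕ} (c : ℕ → ℝ) {j : ℕ} (hj : j ∈ s) :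
    ‖c j • x j‖ ≤ 2 * K * ‖∑ i ∈ s, c i • x i‖ := by
  classical
  set P : ℕ → X := fun m => ∑ i ∈ s with i < m, c i • x i
  have hP : ∀ m, ‖P m‖ ≤ K * ‖∑ i ∈ s, c i • x i‖ := by
    rintro (_ | m)
    · simp [P]
      positivity
    · rw [← Finset.sum_filter_add_sum_filter_not s (· < m + 1)]
      refine hx m _ (sum_smul_mem _ _ fun i hi => subset_span ⟨i, ?_, rfl⟩) _
        (sum_smul_mem _ _ fun i hi => subset_span ⟨i, ?_, rfl⟩) <;>
        simpa [Nat.lt_succ_iff] using (Finset.mem_filter.1 hi).2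
  have hPj : P (j + 1) = c j • x j + P j := by
    have : ({i ∈ s | i < j + 1} : Finset ℕ) = insert j {i ∈ s | i < j} := by grind
    simp only [P, this]
    exact Finset.sum_insert (by simp)
  calc ‖c j • x j‖ = ‖P (j + 1) - P j‖ := by rw [hPj, add_sub_cancel_right]
    _ ≤ ‖P (j + 1)‖ + ‖P j‖ := norm_sub_le _ _
    _ ≤ 2 * K * ‖∑ i ∈ s, c i • x i‖ := by linarith [hP (j + 1), hP j]

theorem HasBasisConstantLE.linearIndependent {K : ℝ} {x : ℕ → X}
    (hx : HasBasisConstantLE K x) (hK : 0 ≤ K) (hx0 : ∀ n, x n ≠ 0) :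
    LinearIndependent ℝ x := by
  rw [linearIndependent_iff']
  intro s c hsum j hj
  have := hx.norm_smul_le hK c hj
  rw [hsum, norm_zero, mul_zero, norm_le_zero_iff, smul_eq_zero] at this
  exact this.resolve_right (hx0 j)

theorem HasBasisConstantLE.norm_apply_le {Y : Type*} [NormedAddCommGroup Y] [NormedSpace ℝ Y]
    {K : ℝ} {x : ℕ → X} (hx : HasBasisConstantLE K x) (hK : 0 ≤ K) (T : X →L[ℝ] Y)
    {δ : ℕ → ℝ} (hδ : ∀ j, ‖T (x j)‖ ≤ δ j * ‖x j‖) (hδ0 : ∀ j, 0 ≤ δ j) (hδs : Summable δ)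
    {u : X} (hu : u ∈ span ℝ (range x)) :
    ‖T u‖ ≤ 2 * K * (∑' j, δ j) * ‖u‖ := by
  obtain ⟨c, rfl⟩ := Finsupp.mem_span_range_iff_exists_finsupp.1 hu
  set u := c.sum fun i a => a • x i
  have hterm : ∀ i ∈ c.support, ‖T (c i • x i)‖ ≤ δ i * (2 * K * ‖u‖) := fun i hi =>
    calc ‖T (c i • x i)‖ = ‖c i‖ * ‖T (x i)‖ := by rw [map_smul, norm_smul]
      _ ≤ ‖c i‖ * (δ i * ‖x i‖) := by gcongr; exact hδ i
      _ = δ i * ‖c i • x i‖ := by rw [norm_smul]; ring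
      _ ≤ δ i * (2 * K * ‖u‖) := by gcongr; exacts [hδ0 i, hx.norm_smul_le hK c hi]
  calc ‖T u‖ = ‖∑ i ∈ c.support, T (c i • x i)‖ := by rw [← map_sum]; rfl
    _ ≤ ∑ i ∈ c.support, δ i * (2 * K * ‖u‖) := (norm_sum_le _ _).trans (Finset.sum_le_sum hterm)
    _ = (∑ i ∈ c.support, δ i) * (2 * K * ‖u‖) := (Finset.sum_mul ..).symm
    _ ≤ (∑' j, δ j) * (2 * K * ‖u‖) := by
        gcongr
        exact hδs.sum_le_tsum _ fun j _ => hδ0 j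
    _ = 2 * K * (∑' j, δ j) * ‖u‖ := by ring

theorem exists_ne_zero_norm_apply_le_of_not_boundedBelow {Y : Type*}
    [NormedAddCommGroup Y] [NormedSpace ℝ Y] (T : X →L[ℝ] Y)
    (hT : ¬ ∃ X₀ : Submodule ℝ X, IsClosed (X₀ : Set X) ∧ FiniteDimensional ℝ (X ⧸ X₀) ∧
      ∃ c > (0 : ℝ), ∀ x ∈ X₀, c * ‖x‖ ≤ ‖T x‖)
    (G : Finset (StrongDual ℝ X)) {c : ℝ} (hc : 0 < c) :
    ∃ x, (x ≠ 0 ∧ ‖T x‖ ≤ c * ‖x‖) ∧ ∀ f ∈ G, f x = 0 := by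
  let Φ : X →L[ℝ] (G → ℝ) := ContinuousLinearMap.pi fun f => f
  by_contra! h
  refine hT ⟨LinearMap.ker (Φ : X →ₗ[ℝ] (G → ℝ)), Φ.isClosed_ker,
    Module.Finite.equiv (LinearMap.quotKerEquivRange _).symm, c, hc, fun x hx => ?_⟩
  rcases eq_or_ne x 0 with rfl | hx0
  · simp
  by_contra! hlt
  obtain ⟨f, hf, hfx⟩ := h x ⟨hx0, hlt.le⟩
  exact hfx (congrFun hx ⟨f, hf⟩)

theorem Submodule.exists_mem_ne_zero_of_finiteDimensional_quotient {K V : Type*} [DivisionRing K]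
    [AddCommGroup V] [Module K V] {p q : Submodule K V} [FiniteDimensional K (V ⧸ p)]
    (hq : ¬ FiniteDimensional K q) : ∃ z ∈ q, z ∈ p ∧ z ≠ 0 := by
  by_contra! h
  refine hq (FiniteDimensional.of_injective (p.mkQ ∘ₗ q.subtype)
    ((injective_iff_map_eq_zero _).2 fun z hz => Subtype.ext (h z z.2 ?_)))
  simpa using hz

theorem Submodule.forall_mem_topologicalClosure_norm_apply_le {Y : Type*}
    [NormedAddCommGroup Y] [NormedSpace ℝ Y] (T : X →L[ℝ] Y) {p : Submodule ℝ X} {C : ℝ}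
    (hp : ∀ u ∈ p, ‖T u‖ ≤ C * ‖u‖) : ∀ u ∈ p.topologicalClosure, ‖T u‖ ≤ C * ‖u‖ :=
  closure_minimal hp (isClosed_le (continuous_norm.comp T.continuous)
    (continuous_const.mul continuous_norm))

theorem Submodule.not_finiteDimensional_of_linearIndependent {K V ι : Type*} [DivisionRing K]
    [AddCommGroup V] [Module K V] [Infinite ι] {x : ι → V} (hx : LinearIndependent K x)
    {p : Submodule K V} (hp : ∀ i, x i ∈ p) : ¬ FiniteDimensional K p := fun _ =>
  Module.Finite.not_linearIndependent_of_infinite (fun i => (⟨x i, hp i⟩ : p))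
    (LinearIndependent.of_comp p.subtype hx)

end

theorem statement17_general
    (X : Type) [NormedAddCommGroup X] [NormedSpace ℝ X]
    (Y : Type) [NormedAddCommGroup Y] [NormedSpace ℝ Y]
    (T : X →L[ℝ] Y) :
    (¬ ∃ X₀ : Submodule ℝ X, IsClosed (X₀ : Set X) ∧ FiniteDimensional ℝ (X ⧸ X₀) ∧
        ∃ c > (0 : ℝ), ∀ x ∈ X₀, c * ‖x‖ ≤ ‖T x‖) ↔
    (∀ ε > (0 : ℝ), ∃ Xε : Submodule ℝ X, IsClosed (Xε : Set X) ∧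
        ¬ FiniteDimensional ℝ Xε ∧ ∀ x ∈ Xε, ‖T x‖ ≤ ε * ‖x‖) := by
  constructor
  · intro hT ε hε
    obtain ⟨x, hxT, hx⟩ := exists_seq_hasBasisConstantLE_two _ fun n G =>
      exists_ne_zero_norm_apply_le_of_not_boundedBelow T hT G
        (c := ε / 4 / 2 / 2 ^ n) (by positivity)
    have hspan : ∀ u ∈ span ℝ (range x), ‖T u‖ ≤ ε * ‖u‖ := fun u hu => by
      have := hx.norm_apply_le zero_le_two T (fun n => (hxT n).2) (fun n => by positivity)
        (summable_geometric_two' _) hu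
      rwa [tsum_geometric_two', show 2 * 2 * (ε / 4) = ε by ring] at this
    refine ⟨_, isClosed_topologicalClosure _, ?_,
      forall_mem_topologicalClosure_norm_apply_le T hspan⟩
    exact not_finiteDimensional_of_linearIndependent
      (hx.linearIndependent zero_le_two fun n => (hxT n).1)
      fun n => le_topologicalClosure _ (subset_span (mem_range_self n))
  · rintro hsmall ⟨X₀, -, hfin, c, hc, hbelow⟩
    obtain ⟨Z, -, hZ, hTZ⟩ := hsmall (c / 2) (half_pos hc)
    obtain ⟨z, hzZ, hzX₀, hz⟩ := exists_mem_ne_zero_of_finiteDimensional_quotient (p := X₀) hZ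
    nlinarith [hbelow z hzX₀, hTZ z hzZ, mul_pos hc (norm_pos_iff.2 hz)]

/-- a bounded operator `T : X → Y` between infinite-dimensional Banach
spaces is infinitely singular (there is no finite-codimensional closed subspace of `X` on
which `T` is bounded below, i.e. an isomorphism onto its image) if and only if for every
`ε > 0` there is an infinite-dimensional closed subspace `X_ε ⊆ X` with
`‖T|_{X_ε}‖ ≤ ε`. -/
theorem statement17
    (X : Type) [NormedAddCommGroup X] [NormedSpace ℝ X] [CompleteSpace X]
    (Y : Type) [NormedAddCommGroup Y] [NormedSpace ℝ Y] [CompleteSpace Y]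
    (hX : ¬ FiniteDimensional ℝ X) (hY : ¬ FiniteDimensional ℝ Y)
    (T : X →L[ℝ] Y) :
    (¬ ∃ X₀ : Submodule ℝ X, IsClosed (X₀ : Set X) ∧ FiniteDimensional ℝ (X ⧸ X₀) ∧
        ∃ c > (0 : ℝ), ∀ x ∈ X₀, c * ‖x‖ ≤ ‖T x‖) ↔
    (∀ ε > (0 : ℝ), ∃ Xε : Submodule ℝ X, IsClosed (Xε : Set X) ∧
        ¬ FiniteDimensional ℝ Xε ∧ ∀ x ∈ Xε, ‖T x‖ ≤ ε * ‖x‖) :=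
  statement17_general X Y T
end

section
/- Let Y be a hereditarily indecomposable Banach space and X = Y ⊕ ℓ₂. Then X contains no direct sum of two non-Hilbertian subspaces: if U, V are infinite-dimensional closed subspaces of X with U ∩ V = {0} and U + V closed, then U or V is isomorphic to a Hilbert space. -/
/-- The Hilbert space `ℓ₂` of square-summable real sequences. -/
noncomputable abbrev ellTwo : Type := lp (fun _ : ℕ => ℝ) 2

/-- A Banach space `Y` is hereditarily indecomposable (HI) if it contains no topological
direct sum of two infinite-dimensional closed subspaces. -/
def IsHI (Y : Type) [NormedAddCommGroup Y] [NormedSpace ℝ Y] : Prop :=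
  ∀ U V : Submodule ℝ Y, IsClosed (U : Set Y) → IsClosed (V : Set Y) →
    ¬ FiniteDimensional ℝ U → ¬ FiniteDimensional ℝ V →
    U ⊓ V = ⊥ → ¬ IsClosed ((U ⊔ V : Submodule ℝ Y) : Set Y)

/-- A (finite- or infinite-dimensional) normed space `E` is Hilbertian if it admits an
equivalent inner-product norm, i.e. it is linearly isomorphic to a Hilbert space. -/
def IsHilbertian (E : Type) [NormedAddCommGroup E] [Module ℝ E] : Prop :=
  ∃ (B : E →ₗ[ℝ] E →ₗ[ℝ] ℝ) (c C : ℝ), 0 < c ∧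
    (∀ x y, B x y = B y x) ∧
    ∀ x, c * ‖x‖ ^ 2 ≤ B x x ∧ B x x ≤ C * ‖x‖ ^ 2

/-!
If `U` and `V` were both non-Hilbertian, the projection `X → ℓ₂` would be infinitely singular on
each of them, so `U` and `V` contain closed infinite-dimensional subspaces `M` and `N` on which it
has norm at most `ε`. For `ε` small compared with the constant of the decomposition `U ⊕ V`, the
projection `X → Y` is then an isomorphism on `M ⊕ N`, whose image is a topological direct sum of
two infinite-dimensional closed subspaces of `Y`.

An operator `T : E → H` into a Hilbert space is infinitely singular unless `E` is Hilbertian. If `T`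
is bounded below on the common kernel of finitely many functionals `f`, then `x ↦ (T x, (f x)_f)`
embeds `E` isomorphically into a Hilbert space. Otherwise one picks unit vectors `x n` with
`T (x n)` tiny, each killed by norming functionals of the previous ones; in this triangular system
the `n`-th coefficient of a finite combination `z` is at most `2 ^ n * ‖z‖`.
-/

open scoped NNReal
open Finset

theorem IsHilbertian.of_le_norm_add_norm {E : Type} [NormedAddCommGroup E] [NormedSpace ℝ E]
    {H₁ H₂ : Type*} [NormedAddCommGroup H₁] [InnerProductSpace ℝ H₁] [NormedAddCommGroup H₂]
    [InnerProductSpace ℝ H₂]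
    (T₁ : E →L[ℝ] H₁) (T₂ : E →L[ℝ] H₂) {c : ℝ} (hc : 0 < c)
    (h : ∀ x, c * ‖x‖ ≤ ‖T₁ x‖ + ‖T₂ x‖) : IsHilbertian E := by
  let B : E →ₗ[ℝ] E →ₗ[ℝ] ℝ := (innerₗ H₁).compl₁₂ (T₁ : E →ₗ[ℝ] H₁) (T₁ : E →ₗ[ℝ] H₁) +
    (innerₗ H₂).compl₁₂ (T₂ : E →ₗ[ℝ] H₂) (T₂ : E →ₗ[ℝ] H₂)
  refine ⟨B, c ^ 2 / 2, ‖T₁‖ ^ 2 + ‖T₂‖ ^ 2, by positivity, fun x y => ?_, fun x => ?_⟩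
  · simp [B, real_inner_comm]
  · have hB : B x x = ‖T₁ x‖ ^ 2 + ‖T₂ x‖ ^ 2 := by simp [B]
    rw [hB]
    have h₁ := T₁.le_opNorm x
    have h₂ := T₂.le_opNorm x
    constructor
    · have hsq := pow_le_pow_left₀ (by positivity) (h x) 2
      nlinarith [sq_nonneg (‖T₁ x‖ - ‖T₂ x‖)]
    · nlinarith [norm_nonneg (T₁ x), norm_nonneg (T₂ x), norm_nonneg x,
        mul_le_mul h₁ h₁ (norm_nonneg _) (by positivity),
        mul_le_mul h₂ h₂ (norm_nonneg _) (by positivity)]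

theorem exists_mul_norm_le_norm_add_norm {𝕜 E F₁ F₂ : Type*} [NontriviallyNormedField 𝕜]
    [CompleteSpace 𝕜] [NormedAddCommGroup E] [NormedSpace 𝕜 E] [NormedAddCommGroup F₁]
    [NormedSpace 𝕜 F₁] [NormedAddCommGroup F₂] [NormedSpace 𝕜 F₂] [FiniteDimensional 𝕜 F₂]
    (T : E →L[𝕜] F₁) (G : E →L[𝕜] F₂) {c : ℝ} (hc : 0 < c)
    (h : ∀ x, G x = 0 → c * ‖x‖ ≤ ‖T x‖) :
    ∃ c' > 0, ∀ x, c' * ‖x‖ ≤ ‖T x‖ + ‖G x‖ := by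
  let g : E →ₗ[𝕜] F₂ := G
  obtain ⟨S, hS⟩ := g.rangeRestrict.exists_rightInverse_of_surjective g.range_rangeRestrict
  let S' : LinearMap.range g →L[𝕜] E := LinearMap.toContinuousLinearMap S
  refine ⟨c / (1 + (‖T‖ + c) * ‖S'‖), by positivity, fun x => ?_⟩
  set w := S' (g.rangeRestrict x)
  have hGw : G (x - w) = 0 := by
    have : g.rangeRestrict w = g.rangeRestrict x := LinearMap.congr_fun hS _
    simpa [sub_eq_zero, g] using congrArg Subtype.val this.symm
  have hTw : c * ‖x - w‖ ≤ ‖T x‖ + ‖T‖ * ‖w‖ := by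
    calc c * ‖x - w‖ ≤ ‖T x - T w‖ := map_sub T x w ▸ h _ hGw
      _ ≤ ‖T x‖ + ‖T‖ * ‖w‖ := (norm_sub_le _ _).trans (by gcongr; exact T.le_opNorm w)
  have hw : ‖w‖ ≤ ‖S'‖ * ‖G x‖ := S'.le_opNorm _
  have hx : ‖x‖ ≤ ‖x - w‖ + ‖w‖ := norm_le_norm_sub_add x w
  have hk : 0 ≤ (‖T‖ + c) * ‖S'‖ := by positivity
  rw [div_mul_eq_mul_div, div_le_iff₀ (by positivity)]
  calc c * ‖x‖ ≤ ‖T x‖ + (‖T‖ + c) * ‖w‖ := by nlinarith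
    _ ≤ ‖T x‖ + (‖T‖ + c) * ‖S'‖ * ‖G x‖ := by rw [mul_assoc]; gcongr
    _ ≤ (‖T x‖ + ‖G x‖) * (1 + (‖T‖ + c) * ‖S'‖) := by
      nlinarith [mul_nonneg (norm_nonneg (T x)) hk, norm_nonneg (G x)]

theorem IsHilbertian.of_le_norm_of_forall_apply_eq_zero {E : Type} [NormedAddCommGroup E]
    [NormedSpace ℝ E] {H : Type*} [NormedAddCommGroup H] [InnerProductSpace ℝ H]
    (T : E →L[ℝ] H) (s : Finset (StrongDual ℝ E)) {c : ℝ} (hc : 0 < c)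
    (h : ∀ x, (∀ f ∈ s, f x = 0) → c * ‖x‖ ≤ ‖T x‖) : IsHilbertian E := by
  let G : E →L[ℝ] EuclideanSpace ℝ s := (EuclideanSpace.equiv s ℝ).symm.toContinuousLinearMap ∘L
    ContinuousLinearMap.pi fun f : s => (f : StrongDual ℝ E)
  have hG : ∀ x, G x = 0 → c * ‖x‖ ≤ ‖T x‖ := fun x hx => h x fun f hf => by
    simpa [G] using congrFun (congrArg (EuclideanSpace.equiv s ℝ) hx) ⟨f, hf⟩
  obtain ⟨c', hc', hT⟩ := exists_mul_norm_le_norm_add_norm T G hc hG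
  exact .of_le_norm_add_norm T G hc' hT

theorem Finsupp.exists_sum_smul_eq_sum_range {R M : Type*} [Semiring R] [AddCommMonoid M]
    [Module R M] (l : ℕ →₀ R) (v : ℕ → M) :
    ∃ N, (∀ n, N ≤ n → l n = 0) ∧ l.sum (fun i c => c • v i) = ∑ i ∈ range N, l i • v i := by
  obtain ⟨N, hN⟩ := l.support.exists_nat_subset_range
  refine ⟨N, fun n hn => Finsupp.notMem_support_iff.1 fun h => ?_,
    Finsupp.sum_of_support_subset l hN _ fun _ _ => zero_smul R _⟩
  simpa using (mem_range.1 (hN h)).trans_le hn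

theorem Submodule.exists_eq_sum_range_of_mem_span_range {R M : Type*} [Semiring R]
    [AddCommMonoid M] [Module R M] {v : ℕ → M} {z : M} (hz : z ∈ span R (Set.range v)) :
    ∃ (a : ℕ → R) (N : ℕ), z = ∑ i ∈ range N, a i • v i := by
  obtain ⟨l, rfl⟩ := Finsupp.mem_span_range_iff_exists_finsupp.1 hz
  obtain ⟨N, -, hN⟩ := l.exists_sum_smul_eq_sum_range v
  exact ⟨l, N, hN⟩

structure IsTriangularSystem {E : Type*} [NormedAddCommGroup E] [NormedSpace ℝ E]
    (x : ℕ → E) (f : ℕ → StrongDual ℝ E) : Prop where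
  norm_le : ∀ n, ‖x n‖ ≤ 1
  norm_dual_le : ∀ n, ‖f n‖ ≤ 1
  apply_self : ∀ n, f n (x n) = 1
  apply_of_lt : ∀ {m n}, m < n → f m (x n) = 0

namespace IsTriangularSystem

variable {E : Type*} [NormedAddCommGroup E] [NormedSpace ℝ E] {x : ℕ → E}
  {f : ℕ → StrongDual ℝ E}

theorem abs_le_norm_add_sum (hs : IsTriangularSystem x f) (a : ℕ → ℝ) {n N : ℕ} (hn : n < N) :
    |a n| ≤ ‖∑ i ∈ range N, a i • x i‖ + ∑ i ∈ range n, |a i| := by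
  have hfz : f n (∑ i ∈ range N, a i • x i) = ∑ i ∈ range n, a i * f n (x i) + a n := by
    have hvanish : ∀ i ∈ range N, i ∉ range (n + 1) → a i * f n (x i) = 0 := fun i _ hi => by
      rw [hs.apply_of_lt (by simpa using hi), mul_zero]
    simp only [map_sum, map_smul, smul_eq_mul]
    rw [← sum_subset (range_subset_range.2 hn) hvanish, sum_range_succ, hs.apply_self, mul_one]
  have hfx : ∀ i, |f n (x i)| ≤ 1 := fun i =>
    ((f n).le_opNorm (x i)).trans (mul_le_one₀ (hs.norm_dual_le n) (norm_nonneg _) (hs.norm_le i))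
  calc |a n| = |f n (∑ i ∈ range N, a i • x i) - ∑ i ∈ range n, a i * f n (x i)| := by
        rw [hfz, add_sub_cancel_left]
    _ ≤ ‖∑ i ∈ range N, a i • x i‖ + ∑ i ∈ range n, |a i| := by
      refine (abs_sub _ _).trans (add_le_add ?_ ?_)
      · exact ((f n).le_opNorm _).trans (mul_le_of_le_one_left (norm_nonneg _) (hs.norm_dual_le n))
      · refine (abs_sum_le_sum_abs _ _).trans (sum_le_sum fun i _ => ?_)
        rw [abs_mul]
        exact mul_le_of_le_one_right (abs_nonneg _) (hfx i)

theorem sum_abs_le (hs : IsTriangularSystem x f) (a : ℕ → ℝ) {n N : ℕ} (hn : n ≤ N) :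
    ∑ i ∈ range n, |a i| ≤ (2 ^ n - 1) * ‖∑ i ∈ range N, a i • x i‖ := by
  induction n with
  | zero => simp
  | succ n ih =>
    have ih := ih (by omega)
    have hstep := hs.abs_le_norm_add_sum a (n := n) (N := N) (by omega)
    rw [sum_range_succ, pow_succ]
    linarith

theorem abs_le (hs : IsTriangularSystem x f) (a : ℕ → ℝ) {n N : ℕ} (hn : n < N) :
    |a n| ≤ 2 ^ n * ‖∑ i ∈ range N, a i • x i‖ := by
  linarith [hs.abs_le_norm_add_sum a hn, hs.sum_abs_le a hn.le]

theorem linearIndependent (hs : IsTriangularSystem x f) : LinearIndependent ℝ x := by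
  refine linearIndependent_iff.2 fun l hl => Finsupp.ext fun n => ?_
  obtain ⟨N, hlN, hsum⟩ := l.exists_sum_smul_eq_sum_range x
  rw [Finsupp.linearCombination_apply, hsum] at hl
  rcases lt_or_ge n N with hn | hn
  · simpa [hl] using hs.abs_le l hn
  · exact hlN n hn

theorem norm_apply_le {F : Type*} [NormedAddCommGroup F] [NormedSpace ℝ F]
    (hs : IsTriangularSystem x f) (T : E →L[ℝ] F) {ε : ℝ} (hT : ∀ n, ‖T (x n)‖ ≤ ε / 4 ^ n)
    {z : E} (hz : z ∈ Submodule.span ℝ (Set.range x)) : ‖T z‖ ≤ 2 * ε * ‖z‖ := by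
  obtain ⟨a, N, rfl⟩ := Submodule.exists_eq_sum_range_of_mem_span_range hz
  set z := ∑ i ∈ range N, a i • x i
  have hε : 0 ≤ ε := by simpa using (norm_nonneg _).trans (hT 0)
  have hterm : ∀ i ∈ range N, ‖a i • T (x i)‖ ≤ ε * ‖z‖ * (1 / 2) ^ i := fun i hi => by
    have h4 : (4 : ℝ) ^ i = 2 ^ i * 2 ^ i := by rw [← mul_pow]; norm_num
    calc ‖a i • T (x i)‖ = |a i| * ‖T (x i)‖ := by rw [norm_smul, Real.norm_eq_abs]
      _ ≤ 2 ^ i * ‖z‖ * (ε / 4 ^ i) := by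
        gcongr
        exacts [hs.abs_le a (mem_range.1 hi), hT i]
      _ = ε * ‖z‖ * (1 / 2) ^ i := by rw [h4, one_div_pow]; field_simp
  calc ‖T z‖ = ‖∑ i ∈ range N, a i • T (x i)‖ := by simp [z, map_sum]
    _ ≤ ∑ i ∈ range N, ε * ‖z‖ * (1 / 2) ^ i := norm_sum_le_of_le _ hterm
    _ ≤ ε * ‖z‖ * 2 := by rw [← mul_sum]; gcongr; exact sum_geometric_two_le N
    _ = 2 * ε * ‖z‖ := by ring

end IsTriangularSystem

theorem exists_isTriangularSystem {E F : Type*} [NormedAddCommGroup E] [NormedSpace ℝ E]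
    [NormedAddCommGroup F] [NormedSpace ℝ F] (T : E →L[ℝ] F)
    (hT : ∀ s : Finset (StrongDual ℝ E), ∀ δ > 0, ∃ x, (∀ f ∈ s, f x = 0) ∧ ‖T x‖ < δ * ‖x‖)
    (δ : ℕ → ℝ) (hδ : ∀ n, 0 < δ n) :
    ∃ x f, IsTriangularSystem x f ∧ ∀ n, ‖T (x n)‖ ≤ δ n := by
  classical
  have hunit (s : List (StrongDual ℝ E)) (n : ℕ) :
      ∃ y : E, ‖y‖ = 1 ∧ (∀ g ∈ s, g y = 0) ∧ ‖T y‖ ≤ δ n := by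
    obtain ⟨y, hys, hTy⟩ := hT s.toFinset (δ n) (hδ n)
    have hy : 0 < ‖y‖ := by
      by_contra! hy
      simp [norm_le_zero_iff.1 hy] at hTy
    refine ⟨‖y‖⁻¹ • y, by simp [norm_smul, hy.ne'],
      fun g hg => by simp [hys g (List.mem_toFinset.2 hg)], ?_⟩
    rw [map_smul, norm_smul, norm_inv, norm_norm, inv_mul_le_iff₀ hy, mul_comm]
    exact hTy.le
  choose pick hpick_norm hpick_ker hpick_T using hunit
  have hdual (y : E) (hy : ‖y‖ = 1) : ∃ g : StrongDual ℝ E, ‖g‖ = 1 ∧ g y = 1 := by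
    simpa [hy] using exists_dual_vector ℝ y (by simp [hy])
  choose! dual hdual_norm hdual_apply using hdual
  let fs : ℕ → List (StrongDual ℝ E) := fun n => Nat.rec [] (fun n l => dual (pick l n) :: l) n
  let x n := pick (fs n) n
  have hmem {m n : ℕ} (hmn : m < n) : dual (x m) ∈ fs n := by
    induction n with
    | zero => omega
    | succ n ih =>
      rcases Nat.lt_succ_iff_lt_or_eq.1 hmn with h | rfl
      · exact List.mem_cons_of_mem _ (ih h)
      · exact List.mem_cons_self
  exact ⟨x, fun n => dual (x n),
    ⟨fun n => (hpick_norm _ _).le, fun n => (hdual_norm _ (hpick_norm _ _)).le,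
      fun n => hdual_apply _ (hpick_norm _ _), fun hmn => hpick_ker _ _ _ (hmem hmn)⟩,
    fun n => hpick_T _ _⟩

def IsInfinitelySingular {E F : Type*} [NormedAddCommGroup E] [NormedSpace ℝ E]
    [NormedAddCommGroup F] [NormedSpace ℝ F] (T : E →L[ℝ] F) : Prop :=
  ∀ ε > 0, ∃ M : Submodule ℝ E, IsClosed (M : Set E) ∧ ¬ FiniteDimensional ℝ M ∧
    ∀ x ∈ M, ‖T x‖ ≤ ε * ‖x‖

theorem isInfinitelySingular_of_not_isHilbertian {E : Type} [NormedAddCommGroup E]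
    [NormedSpace ℝ E] {H : Type*} [NormedAddCommGroup H] [InnerProductSpace ℝ H]
    (T : E →L[ℝ] H) (hE : ¬ IsHilbertian E) : IsInfinitelySingular T := by
  intro ε hε
  have hT : ∀ s : Finset (StrongDual ℝ E), ∀ δ > 0, ∃ x, (∀ f ∈ s, f x = 0) ∧ ‖T x‖ < δ * ‖x‖ := by
    by_contra! h
    obtain ⟨s, δ, hδ, h⟩ := h
    exact hE (.of_le_norm_of_forall_apply_eq_zero T s hδ h)
  obtain ⟨x, f, hs, hTx⟩ :=
    exists_isTriangularSystem T hT (fun n => ε / 2 / 4 ^ n) fun n => by positivity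
  set M := Submodule.span ℝ (Set.range x)
  refine ⟨M.topologicalClosure, M.isClosed_topologicalClosure, fun hfin => ?_, ?_⟩
  · have : FiniteDimensional ℝ M := Submodule.finiteDimensional_of_le M.le_topologicalClosure
    exact Module.Finite.not_linearIndependent_of_infinite _
      (linearIndependent_span hs.linearIndependent)
  · have hbound : (M : Set E) ⊆ {z | ‖T z‖ ≤ ε * ‖z‖} := fun z hz => by
      simpa [mul_div_cancel₀] using hs.norm_apply_le T hTx hz
    intro z hz
    rw [← SetLike.mem_coe, Submodule.topologicalClosure_coe] at hz
    exact closure_minimal hbound (isClosed_le (by fun_prop) (by fun_prop)) hz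

theorem Submodule.exists_norm_add_norm_le_of_isClosed_sup {𝕜 E : Type*}
    [NontriviallyNormedField 𝕜] [NormedAddCommGroup E] [NormedSpace 𝕜 E] [CompleteSpace E]
    {U V : Submodule 𝕜 E} (hU : IsClosed (U : Set E)) (hV : IsClosed (V : Set E))
    (hUV : U ⊓ V = ⊥) (hsup : IsClosed ((U ⊔ V : Submodule 𝕜 E) : Set E)) :
    ∃ K : ℝ≥0, ∀ u ∈ U, ∀ v ∈ V, ‖u‖ + ‖v‖ ≤ K * ‖u + v‖ := by
  have := hU.completeSpace_coe
  have := hV.completeSpace_coe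
  let φ : U × V →L[𝕜] E := U.subtypeL.coprod V.subtypeL
  have hinj : Function.Injective φ := (injective_iff_map_eq_zero φ).2 fun p hp => by
    change (p.1 : E) + p.2 = 0 at hp
    have hu : (p.1 : E) ∈ U ⊓ V := ⟨p.1.2, by
      rw [eq_neg_of_add_eq_zero_left hp]; exact V.neg_mem p.2.2⟩
    rw [hUV, Submodule.mem_bot] at hu
    have hv : (p.2 : E) = 0 := by simpa [hu] using hp
    exact Prod.ext (Subtype.ext hu) (Subtype.ext hv)
  have hrange : Set.range φ = (U ⊔ V : Submodule 𝕜 E) := by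
    change Set.range (φ : U × V →ₗ[𝕜] E) = _
    rw [← LinearMap.coe_range]
    simp [φ, LinearMap.range_coprod]
  obtain ⟨K, hK⟩ := φ.antilipschitz_of_injective_of_isClosed_range hinj (hrange ▸ hsup)
  refine ⟨2 * K, fun u hu v hv => ?_⟩
  let p : U × V := (⟨u, hu⟩, ⟨v, hv⟩)
  have hp : ‖p‖ ≤ K * ‖u + v‖ := φ.bound_of_antilipschitz hK p
  have h₁ : ‖u‖ ≤ ‖p‖ := norm_fst_le p
  have h₂ : ‖v‖ ≤ ‖p‖ := norm_snd_le p
  push_cast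
  linarith

theorem IsHI.not_forall_norm_add_norm_le {Y : Type} [NormedAddCommGroup Y] [NormedSpace ℝ Y]
    (hY : IsHI Y) {E F : Type*} [NormedAddCommGroup E] [NormedSpace ℝ E] [CompleteSpace E]
    [NormedAddCommGroup F] [NormedSpace ℝ F] [CompleteSpace F] (hE : ¬ FiniteDimensional ℝ E)
    (hF : ¬ FiniteDimensional ℝ F) (f : E →L[ℝ] Y) (g : F →L[ℝ] Y) (K : ℝ≥0) :
    ¬ ∀ x y, ‖x‖ + ‖y‖ ≤ K * ‖f x + g y‖ := by
  intro h
  have hf : AntilipschitzWith K f := f.antilipschitz_of_bound fun x => by simpa using h x 0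
  have hg : AntilipschitzWith K g := g.antilipschitz_of_bound fun y => by simpa using h 0 y
  have hfg : AntilipschitzWith K (f.coprod g) := (f.coprod g).antilipschitz_of_bound fun p =>
    (max_le_add_of_nonneg (norm_nonneg _) (norm_nonneg _)).trans (h p.1 p.2)
  refine hY (LinearMap.range (f : E →ₗ[ℝ] Y)) (LinearMap.range (g : F →ₗ[ℝ] Y)) ?_ ?_ ?_ ?_ ?_ ?_
  · rw [LinearMap.coe_range]; exact hf.isClosed_range f.uniformContinuous
  · rw [LinearMap.coe_range]; exact hg.isClosed_range g.uniformContinuous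
  · intro hfin
    exact hE (LinearEquiv.ofInjective (f : E →ₗ[ℝ] Y) hf.injective).symm.finiteDimensional
  · intro hfin
    exact hF (LinearEquiv.ofInjective (g : F →ₗ[ℝ] Y) hg.injective).symm.finiteDimensional
  · refine (Submodule.eq_bot_iff _).2 fun z ⟨⟨x, hx⟩, ⟨y, hy⟩⟩ => ?_
    have hxy := h x (-y)
    change f x = z at hx
    change g y = z at hy
    rw [map_neg, hx, hy, add_neg_cancel, norm_zero, mul_zero] at hxy
    rw [← hx, norm_le_zero_iff.1 (by linarith [norm_nonneg (-y)] : ‖x‖ ≤ 0), map_zero]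
  · rw [← LinearMap.range_coprod, LinearMap.coe_range]
    exact hfg.isClosed_range (f.coprod g).uniformContinuous

theorem Prod.norm_fst_eq_of_norm_snd_le {A B : Type*} [SeminormedAddCommGroup A]
    [SeminormedAddCommGroup B] {z : A × B} {δ : ℝ} (hδ : δ < 1) (h : ‖z.2‖ ≤ δ * ‖z‖) :
    ‖z.1‖ = ‖z‖ := by
  rw [Prod.norm_def] at h ⊢
  rcases le_total ‖z.1‖ ‖z.2‖ with hz | hz
  · rw [max_eq_right hz] at h ⊢
    nlinarith [norm_nonneg z.1]
  · rw [max_eq_left hz]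

theorem Prod.norm_add_norm_le_mul_norm_fst_add {A B : Type*} [SeminormedAddCommGroup A]
    [SeminormedAddCommGroup B] {u v : A × B} {K ε : ℝ} (hK : ‖u‖ + ‖v‖ ≤ K * ‖u + v‖)
    (hu : ‖u.2‖ ≤ ε * ‖u‖) (hv : ‖v.2‖ ≤ ε * ‖v‖) (hε : 0 ≤ ε) (hεK : ε * K < 1) :
    ‖u‖ + ‖v‖ ≤ K * ‖u.1 + v.1‖ := by
  have hsnd : ‖(u + v).2‖ ≤ ε * K * ‖u + v‖ :=
    calc ‖u.2 + v.2‖ ≤ ε * (‖u‖ + ‖v‖) := by linarith [norm_add_le u.2 v.2]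
      _ ≤ ε * K * ‖u + v‖ := by rw [mul_assoc]; gcongr
  rwa [← Prod.fst_add, Prod.norm_fst_eq_of_norm_snd_le hεK hsnd]

/-- if `Y` is hereditarily indecomposable and `X = Y ⊕ ℓ₂`, then `X`
contains no direct sum of two non-Hilbertian subspaces: whenever `U, V` are
infinite-dimensional closed subspaces of `X` in topological direct sum
(`U ∩ V = {0}` and `U + V` closed), then `U` or `V` is Hilbertian. -/
theorem statement18 (Y : Type) [NormedAddCommGroup Y] [NormedSpace ℝ Y] [CompleteSpace Y]
    (hY : IsHI Y) :
    ∀ U V : Submodule ℝ (Y × ellTwo),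
      IsClosed (U : Set (Y × ellTwo)) → IsClosed (V : Set (Y × ellTwo)) →
      ¬ FiniteDimensional ℝ U → ¬ FiniteDimensional ℝ V →
      U ⊓ V = ⊥ →
      IsClosed ((U ⊔ V : Submodule ℝ (Y × ellTwo)) : Set (Y × ellTwo)) →
      IsHilbertian ↥U ∨ IsHilbertian ↥V := by
  intro U V hU hV _ _ hUV hsup
  by_contra! hnot
  have := hU.completeSpace_coe
  have := hV.completeSpace_coe
  obtain ⟨K, hK⟩ := Submodule.exists_norm_add_norm_le_of_isClosed_sup hU hV hUV hsup
  set ε : ℝ := (2 * (K + 1))⁻¹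
  have hε : 0 < ε := by positivity
  have hεK : ε * K < 1 := by
    rw [inv_mul_lt_iff₀ (by positivity)]
    linarith [K.coe_nonneg]
  obtain ⟨M, hMc, hMfin, hM⟩ := isInfinitelySingular_of_not_isHilbertian
    (.snd ℝ Y ellTwo ∘L U.subtypeL) hnot.1 ε hε
  obtain ⟨N, hNc, hNfin, hN⟩ := isInfinitelySingular_of_not_isHilbertian
    (.snd ℝ Y ellTwo ∘L V.subtypeL) hnot.2 ε hε
  have := hMc.completeSpace_coe
  have := hNc.completeSpace_coe
  refine hY.not_forall_norm_add_norm_le hMfin hNfin (.fst ℝ Y ellTwo ∘L U.subtypeL ∘L M.subtypeL)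
    (.fst ℝ Y ellTwo ∘L V.subtypeL ∘L N.subtypeL) K fun x y => ?_
  exact Prod.norm_add_norm_le_mul_norm_fst_add (hK _ x.1.2 _ y.1.2) (hM x x.2) (hN y y.2) hε.le hεK
end
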